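/- arXiv:0909.4815 — 13 statements merged into one kernel-verified Lean document; each statement's English description precedes it below -/
import Mathlib

section
/- The point (0,0) is the unique fixed point of Ψ; that is, Ψ(p,d) = (p,d) if and only if (p,d) = (0,0). -/
lemma deriv_zero_of_const_on {Φ Φ' : ℝ → ℝ} (hderiv : ∀ x, HasDerivAt Φ (Φ' x) x)
    {a b x c : ℝ} (hx : x ∈ Set.Ioo a b) (hc : ∀ y ∈ Set.Ioo a b, Φ y = c) :
    Φ' x = 0 := by
  have h : Φ =ᶠ[nhds x] fun _ => c := by
    filter_upwards [Ioo_mem_nhds hx.1 hx.2] with y hy using hc y hy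
  have h0 : HasDerivAt Φ 0 x := (hasDerivAt_const x c).congr_of_eventuallyEq h
  exact (hderiv x).unique h0

/-- The point (0,0) is the unique fixed point of Ψ. -/
theorem fixed_point_unique
    (α J lam : ℝ) (Φ Φ' : ℝ → ℝ)
    (hα : 0 < α) (hα1 : α < 1) (hJ : 0 < J) (hlam : 0 < lam)
    (hmono : Monotone Φ)
    (hbot : Filter.Tendsto Φ Filter.atBot (nhds 0))
    (htop : Filter.Tendsto Φ Filter.atTop (nhds 1))
    (hderiv : ∀ x, HasDerivAt Φ (Φ' x) x)
    (hmax : ∀ x, Φ' x ≤ Φ' 0)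
    (hincr : StrictMonoOn Φ' (Set.Iio (0 : ℝ)))
    (hdecr : StrictAntiOn Φ' (Set.Ioi (0 : ℝ)))
    (hΦ0 : Φ 0 = 1 / 2)
    (Ψ : ℝ × ℝ → ℝ × ℝ)
    (hΨ : ∀ x : ℝ × ℝ, Ψ x =
      (x.1 + lam * x.2,
       α * (1 - 2 * Φ (x.1 + (lam - J) * x.2))
         + (1 - α) * (1 - 2 * Φ (x.1 + lam * x.2)))) :
    ∀ p d : ℝ, Ψ (p, d) = (p, d) ↔ (p, d) = ((0 : ℝ), (0 : ℝ)) := by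
  intro p d
  constructor
  · intro h
    rw [hΨ] at h
    simp only [Prod.mk.injEq] at h ⊢
    obtain ⟨h1, h2⟩ := h
    have hd : d = 0 := by
      have : lam * d = 0 := by linarith
      rcases mul_eq_zero.mp this with h | h
      · exact absurd h (ne_of_gt hlam)
      · exact h
    subst hd
    simp only [mul_zero, add_zero] at h2
    have hΦp : Φ p = 1 / 2 := by nlinarith
    refine ⟨?_, rfl⟩
    by_contra hp
    rcases lt_trichotomy p 0 with hlt | heq | hgt
    · -- Φ constant on [p, 0]
      have hc : ∀ y ∈ Set.Ioo p 0, Φ y = 1/2 := by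
        intro y hy
        have h1' : Φ p ≤ Φ y := hmono hy.1.le
        have h2' : Φ y ≤ Φ 0 := hmono hy.2.le
        rw [hΦp] at h1'; rw [hΦ0] at h2'; linarith
      have ha : (2*p/3 : ℝ) ∈ Set.Ioo p 0 := by constructor <;> linarith
      have hb : (p/3 : ℝ) ∈ Set.Ioo p 0 := by constructor <;> linarith
      have h1' := deriv_zero_of_const_on hderiv ha hc
      have h2' := deriv_zero_of_const_on hderiv hb hc
      have := hincr (show (2*p/3:ℝ) ∈ Set.Iio 0 by simp; linarith)
        (show (p/3:ℝ) ∈ Set.Iio 0 by simp; linarith) (by linarith)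
      rw [h1', h2'] at this; exact lt_irrefl 0 this
    · exact hp heq
    · have hc : ∀ y ∈ Set.Ioo 0 p, Φ y = 1/2 := by
        intro y hy
        have h1' : Φ 0 ≤ Φ y := hmono hy.1.le
        have h2' : Φ y ≤ Φ p := hmono hy.2.le
        rw [hΦp] at h2'; rw [hΦ0] at h1'; linarith
      have ha : (p/3 : ℝ) ∈ Set.Ioo 0 p := by constructor <;> linarith
      have hb : (2*p/3 : ℝ) ∈ Set.Ioo 0 p := by constructor <;> linarith
      have h1' := deriv_zero_of_const_on hderiv ha hc
      have h2' := deriv_zero_of_const_on hderiv hb hc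
      have := hdecr (show (p/3:ℝ) ∈ Set.Ioi 0 by simp; linarith)
        (show (2*p/3:ℝ) ∈ Set.Ioi 0 by simp; linarith) (by linarith)
      rw [h1', h2'] at this; exact lt_irrefl 0 this
  · intro h
    simp only [Prod.mk.injEq] at h
    obtain ⟨hp, hd⟩ := h
    subst hp; subst hd
    rw [hΨ]
    simp [hΦ0]
end

section
/- If either λΦ′(0) > 1 + 2αJΦ′(0), or (λΦ′(0) ≤ 1 + 2αJΦ′(0) and 2αJΦ′(0) > 1), then the origin is an unstable equilibrium of the dynamical system generated by Ψ: there exists ε > 0 such that for every δ > 0 there is an orbit with ‖(p₀,d₀)‖ < δ and with ‖(p_n,d_n)‖ ≥ ε for some n ≥ 1. -/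
/-!
With `φ = Φ'(0)`, the linearisation of `Ψ` at the origin is `A = [[1, λ], [-2φ, -2φ(λ - αJ)]]`,
with characteristic polynomial `χ(μ) = μ² - Tμ + D`, `T = 1 - 2φ(λ - αJ)`, `D = 2αJφ`.
Since `χ(1) = 2λφ > 0`, the first hypothesis puts one eigenvalue below `-1` and the other in
`(-1, 1)`; the second says `D > 1`. Either way `A` has an eigenvalue of modulus `> 1`.

Instability then follows from a cone argument. If `P` and `Q` are linear maps with
`‖P (A v)‖ ≥ a ‖P v‖`, `‖Q (A v)‖ ≤ b ‖Q v‖`, `b < a`, `1 < a`, and `v ↦ (P v, Q v)` is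
injective, then close to the origin the cone `‖Q v‖ ≤ ‖P v‖` is forward invariant and `‖P v‖`
grows geometrically along orbits inside it, so no orbit starting in it stays small.
For real eigenvalues of distinct moduli, `P` and `Q` are the left eigenvectors. For a non-real
or a double eigenvalue one takes `Q = 0` and the covector `P v = c v₁ + (z - a)·v₂` of
`[[a, b], [c, d]]`, with `z` that eigenvalue or, for a double one, a point just above it:
`Im (P v) = Im z · v₂` controls the defect `χ(z)·v₂` of `P` from being a left eigenvector.
-/

open Filter Function ContinuousLinearMap

def UnstableAtZero {E : Type*} [Norm E] (f : E → E) : Prop :=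
  ∃ ε > (0 : ℝ), ∀ δ > (0 : ℝ), ∃ s : ℕ → E,
    (∀ n : ℕ, s (n + 1) = f (s n)) ∧ ‖s 0‖ < δ ∧ ∃ n : ℕ, 1 ≤ n ∧ ε ≤ ‖s n‖

theorem tendsto_atTop_of_dominated_recurrence {p q : ℕ → ℝ} {a b e : ℝ} (hb : 0 ≤ b) (he : 0 ≤ e)
    (hab : b + 2 * e ≤ a - 2 * e) (ha : 1 < a - 2 * e) (hq : ∀ n, 0 ≤ q n)
    (hp_succ : ∀ n, a * p n - e * (p n + q n) ≤ p (n + 1))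
    (hq_succ : ∀ n, q (n + 1) ≤ b * q n + e * (p n + q n))
    (hp0 : 0 < p 0) (hq0 : q 0 ≤ p 0) : Tendsto p atTop atTop := by
  have hcone (n : ℕ) : q n ≤ p n := by
    induction n with
    | zero => exact hq0
    | succ n ih =>
      nlinarith [hp_succ n, hq_succ n, hq n, mul_nonneg hb (sub_nonneg.2 ih),
        mul_nonneg he (sub_nonneg.2 ih), mul_nonneg (by linarith : 0 ≤ a - 4 * e - b)
          ((hq n).trans ih)]
  refine tendsto_atTop_of_geom_le hp0 ha fun n => ?_
  nlinarith [hp_succ n, hcone n]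

section

variable {E F G : Type*} [NormedAddCommGroup E] [NormedSpace ℝ E] [NormedAddCommGroup F]
  [NormedSpace ℝ F] [NormedAddCommGroup G] [NormedSpace ℝ G]

theorem exists_norm_sub_le_of_hasFDerivAt {f : E → E} {L : E →L[ℝ] E} (hf : HasFDerivAt f L 0)
    (hf0 : f 0 = 0) {η : ℝ} (hη : 0 < η) : ∃ ρ > 0, ∀ v, ‖v‖ < ρ → ‖f v - L v‖ ≤ η * ‖v‖ := by
  have := hf.isLittleO.def hη
  simpa [hf0, Metric.eventually_nhds_iff] using this

theorem unstableAtZero_of_hasFDerivAt [FiniteDimensional ℝ E] {f : E → E} {L : E →L[ℝ] E}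
    (hf : HasFDerivAt f L 0) (hf0 : f 0 = 0) (P : E →L[ℝ] F) (Q : E →L[ℝ] G)
    (hPQ : Injective (P.prod Q)) {a b : ℝ} (ha : 1 < a) (hb : 0 ≤ b) (hba : b < a)
    (hP : ∀ v, a * ‖P v‖ ≤ ‖P (L v)‖) (hQ : ∀ v, ‖Q (L v)‖ ≤ b * ‖Q v‖)
    {v₀ : E} (hPv₀ : P v₀ ≠ 0) (hQv₀ : Q v₀ = 0) : UnstableAtZero f := by
  obtain ⟨K, -, hK⟩ := (P.prod Q : E →ₗ[ℝ] F × G).injective_iff_antilipschitz.mp hPQ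
  have hnorm (v : E) : ‖v‖ ≤ K * (‖P v‖ + ‖Q v‖) :=
    (hK.le_mul_norm (map_zero _) v).trans <| by
      gcongr
      exact max_le_add_of_nonneg (norm_nonneg _) (norm_nonneg _)
  -- chosen so that `b + 2e ≤ a - 2e` and `1 < a - 2e`, as the recurrence lemma needs
  set e := (a - max b 1) / 4 with he_def
  have he : 0 < e := by have := max_lt hba ha; linarith
  set C : ℝ := (‖P‖ + ‖Q‖) * K + 1
  have hC : 0 < C := by positivity
  obtain ⟨ρ, hρ, hclose⟩ := exists_norm_sub_le_of_hasFDerivAt hf hf0 (div_pos he hC)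
  have herr (v : E) (hv : ‖v‖ < ρ) : (‖P‖ + ‖Q‖) * ‖f v - L v‖ ≤ e * (‖P v‖ + ‖Q v‖) :=
    calc (‖P‖ + ‖Q‖) * ‖f v - L v‖ ≤ (‖P‖ + ‖Q‖) * (e / C * (K * (‖P v‖ + ‖Q v‖))) := by
          gcongr; exact (hclose v hv).trans (by gcongr; exact hnorm v)
      _ = (‖P‖ + ‖Q‖) * K / C * e * (‖P v‖ + ‖Q v‖) := by ring
      _ ≤ 1 * e * (‖P v‖ + ‖Q v‖) := by
          gcongr
          rw [div_le_one hC]; linarith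
      _ = e * (‖P v‖ + ‖Q v‖) := by ring
  have hPstep (v : E) (hv : ‖v‖ < ρ) : a * ‖P v‖ - e * (‖P v‖ + ‖Q v‖) ≤ ‖P (f v)‖ := by
    have h1 : ‖P (L v)‖ - ‖P (f v)‖ ≤ ‖P‖ * ‖f v - L v‖ :=
      (norm_sub_norm_le _ _).trans (by rw [norm_sub_rev, ← map_sub]; exact P.le_opNorm _)
    nlinarith [hP v, herr v hv, norm_nonneg Q, norm_nonneg (f v - L v)]
  have hQstep (v : E) (hv : ‖v‖ < ρ) : ‖Q (f v)‖ ≤ b * ‖Q v‖ + e * (‖P v‖ + ‖Q v‖) := by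
    have h1 : ‖Q (f v)‖ - ‖Q (L v)‖ ≤ ‖Q‖ * ‖f v - L v‖ :=
      (norm_sub_norm_le _ _).trans (by rw [← map_sub]; exact Q.le_opNorm _)
    nlinarith [hQ v, herr v hv, norm_nonneg P, norm_nonneg (f v - L v)]
  refine ⟨ρ, hρ, fun δ hδ => ?_⟩
  have hv₀ : 0 < ‖v₀‖ := norm_pos_iff.2 fun h => hPv₀ (by rw [h, map_zero])
  set t := min δ ρ / (2 * ‖v₀‖)
  have ht : 0 < t := by positivity
  set s : ℕ → E := fun n => f^[n] (t • v₀)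
  have hs0 : ‖s 0‖ = min δ ρ / 2 := by
    simp only [s, iterate_zero, id, norm_smul, Real.norm_of_nonneg ht.le, t]
    field_simp
  refine ⟨s, fun n => iterate_succ_apply' f n _, by linarith [min_le_left δ ρ, lt_min hδ hρ], ?_⟩
  by_contra! hfar
  have hs (n : ℕ) : ‖s n‖ < ρ := by
    rcases n with _ | n
    · linarith [min_le_right δ ρ, lt_min hδ hρ]
    · exact hfar (n + 1) (Nat.le_add_left 1 n)
  have hsucc (n : ℕ) : s (n + 1) = f (s n) := iterate_succ_apply' f n _
  have hgrow : Tendsto (fun n => ‖P (s n)‖) atTop atTop := by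
    refine tendsto_atTop_of_dominated_recurrence hb he.le (by linarith [le_max_left b 1])
      (by linarith [le_max_right b 1])
      (fun n => norm_nonneg (Q (s n))) (fun n => hsucc n ▸ hPstep _ (hs n))
      (fun n => hsucc n ▸ hQstep _ (hs n)) ?_ ?_
    · simpa [s, norm_smul, ht.ne'] using hPv₀
    · simp [s, hQv₀]
  obtain ⟨n, hn⟩ := (hgrow.eventually_gt_atTop (‖P‖ * ρ)).exists
  have := P.le_opNorm (s n)
  nlinarith [mul_le_mul_of_nonneg_left (hs n).le (norm_nonneg P)]

end

def planarMap (a b c d : ℝ) : ℝ × ℝ →L[ℝ] ℝ × ℝ :=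
  (a • fst ℝ ℝ ℝ + b • snd ℝ ℝ ℝ).prod (c • fst ℝ ℝ ℝ + d • snd ℝ ℝ ℝ)

@[simp]
theorem planarMap_apply (a b c d : ℝ) (v : ℝ × ℝ) :
    planarMap a b c d v = (a * v.1 + b * v.2, c * v.1 + d * v.2) := rfl

noncomputable def planarCovector (a c : ℝ) (z : ℂ) : ℝ × ℝ →L[ℝ] ℂ :=
  (fst ℝ ℝ ℝ).smulRight (c : ℂ) + (snd ℝ ℝ ℝ).smulRight (z - a)

@[simp]
theorem planarCovector_apply (a c : ℝ) (z : ℂ) (v : ℝ × ℝ) :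
    planarCovector a c z v = c * v.1 + (z - a) * v.2 := by
  simp only [planarCovector, add_apply, smulRight_apply, coe_fst', coe_snd', Complex.real_smul]
  ring

theorem planarCovector_planarMap (a b c d : ℝ) (z : ℂ) (v : ℝ × ℝ) :
    planarCovector a c z (planarMap a b c d v) =
      z * planarCovector a c z v - (z ^ 2 - ↑(a + d) * z + ↑(a * d - b * c)) * v.2 := by
  simp only [planarCovector_apply, planarMap_apply]
  push_cast
  ring

theorem im_planarCovector (a c : ℝ) (z : ℂ) (v : ℝ × ℝ) :
    (planarCovector a c z v).im = z.im * v.2 := by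
  simp

theorem eq_zero_of_planarCovector_eq_zero {a c : ℝ} (hc : c ≠ 0) {z : ℂ} {v : ℝ × ℝ}
    (hv : planarCovector a c z v = 0) (hv₂ : v.2 = 0) : v = 0 := by
  rw [planarCovector_apply, hv₂] at hv
  simp only [Complex.ofReal_zero, mul_zero, add_zero, mul_eq_zero, Complex.ofReal_eq_zero] at hv
  exact Prod.ext (hv.resolve_left hc) hv₂

theorem norm_planarCovector_planarMap_of_root {a b c d : ℝ} {μ : ℝ}
    (hμ : μ ^ 2 - (a + d) * μ + (a * d - b * c) = 0) (v : ℝ × ℝ) :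
    ‖planarCovector a c μ (planarMap a b c d v)‖ = |μ| * ‖planarCovector a c μ v‖ := by
  rw [planarCovector_planarMap, ← Complex.ofReal_pow, ← Complex.ofReal_mul, ← Complex.ofReal_sub,
    ← Complex.ofReal_add, hμ]
  simp

theorem unstableAtZero_of_dominant_root {f : ℝ × ℝ → ℝ × ℝ} {a b c d : ℝ}
    (hf : HasFDerivAt f (planarMap a b c d) 0) (hf0 : f 0 = 0) (hc : c ≠ 0) {μ ν : ℝ}
    (hμ : μ ^ 2 - (a + d) * μ + (a * d - b * c) = 0)
    (hν : ν ^ 2 - (a + d) * ν + (a * d - b * c) = 0) (hνμ : |ν| < |μ|) (hμ1 : 1 < |μ|) :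
    UnstableAtZero f := by
  have hμν : μ ≠ ν := by rintro rfl; exact hνμ.false
  have hinj : Injective (planarCovector a c μ |>.prod (planarCovector a c ν)) := by
    refine (injective_iff_map_eq_zero _).2 fun v hv => ?_
    rw [ContinuousLinearMap.prod_apply, Prod.mk_eq_zero] at hv
    refine eq_zero_of_planarCovector_eq_zero hc hv.1 ?_
    have hsub := congrArg₂ (· - ·) hv.1 hv.2
    simp only [planarCovector_apply, sub_zero] at hsub
    have h2 : ((μ - ν : ℝ) : ℂ) * v.2 = 0 := by push_cast; linear_combination hsub
    exact_mod_cast (mul_eq_zero.1 h2).resolve_left (Complex.ofReal_ne_zero.2 (sub_ne_zero.2 hμν))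
  refine unstableAtZero_of_hasFDerivAt hf hf0 _ _ hinj hμ1 (abs_nonneg ν) hνμ
    (fun v => (norm_planarCovector_planarMap_of_root hμ v).ge)
    (fun v => (norm_planarCovector_planarMap_of_root hν v).le) (v₀ := (ν - a, -c)) ?_ ?_
  · have : ((c * (ν - μ) : ℝ) : ℂ) ≠ 0 :=
      Complex.ofReal_ne_zero.2 (mul_ne_zero hc (sub_ne_zero.2 hμν.symm))
    convert this using 1
    simp only [planarCovector_apply]
    push_cast
    ring
  · simp only [planarCovector_apply]
    push_cast
    ring

theorem unstableAtZero_of_expanding_almost_root {f : ℝ × ℝ → ℝ × ℝ} {a b c d : ℝ}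
    (hf : HasFDerivAt f (planarMap a b c d) 0) (hf0 : f 0 = 0) (hc : c ≠ 0) {z : ℂ}
    (hz : z.im ≠ 0)
    (hgrowth : ‖z ^ 2 - ↑(a + d) * z + ↑(a * d - b * c)‖ < (‖z‖ - 1) * |z.im|) :
    UnstableAtZero f := by
  set χ := z ^ 2 - ↑(a + d) * z + ↑(a * d - b * c)
  have him : 0 < |z.im| := abs_pos.2 hz
  have hsnd (v : ℝ × ℝ) : |v.2| ≤ ‖planarCovector a c z v‖ / |z.im| := by
    rw [le_div_iff₀ him, mul_comm, ← abs_mul, ← im_planarCovector]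
    exact Complex.abs_im_le_norm _
  have hinj : Injective ((planarCovector a c z).prod (0 : ℝ × ℝ →L[ℝ] ℝ)) := by
    refine (injective_iff_map_eq_zero _).2 fun v hv => ?_
    rw [ContinuousLinearMap.prod_apply, Prod.mk_eq_zero] at hv
    refine eq_zero_of_planarCovector_eq_zero hc hv.1 (abs_nonpos_iff.1 ?_)
    simpa [hv.1] using hsnd v
  have hexp : 1 < ‖z‖ - ‖χ‖ / |z.im| := by
    have := (div_lt_iff₀ him).2 hgrowth
    linarith
  refine unstableAtZero_of_hasFDerivAt hf hf0 _ _ hinj hexp le_rfl (by linarith)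
    (fun v => ?_) (fun v => by simp) (v₀ := (1, 0)) (by simp [hc]) rfl
  calc (‖z‖ - ‖χ‖ / |z.im|) * ‖planarCovector a c z v‖
      = ‖z‖ * ‖planarCovector a c z v‖ - ‖χ‖ * (‖planarCovector a c z v‖ / |z.im|) := by ring
    _ ≤ ‖z * planarCovector a c z v‖ - ‖χ * v.2‖ := by
      rw [norm_mul, norm_mul, Complex.norm_real, Real.norm_eq_abs]
      gcongr
      exact hsnd v
    _ ≤ ‖z * planarCovector a c z v - χ * v.2‖ := norm_sub_norm_le _ _
    _ = ‖planarCovector a c z (planarMap a b c d v)‖ := by rw [planarCovector_planarMap]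

theorem exists_dominant_roots {T D : ℝ} (hdisc : 4 * D < T ^ 2)
    (h : (1 + T + D < 0 ∧ 0 < 1 - T + D) ∨ 1 < D) :
    ∃ μ ν : ℝ, μ ^ 2 - T * μ + D = 0 ∧ ν ^ 2 - T * ν + D = 0 ∧ |ν| < |μ| ∧ 1 < |μ| := by
  set s := √(T ^ 2 - 4 * D)
  have hs : 0 < s := Real.sqrt_pos.2 (by linarith)
  have hs2 : s ^ 2 = T ^ 2 - 4 * D := Real.sq_sqrt (by linarith)
  have hroot_sub : ((T - s) / 2) ^ 2 - T * ((T - s) / 2) + D = 0 := by linear_combination hs2 / 4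
  have hroot_add : ((T + s) / 2) ^ 2 - T * ((T + s) / 2) + D = 0 := by linear_combination hs2 / 4
  rcases h with ⟨h₁, h₂⟩ | hD
  · have hlo : (T - s) / 2 < -1 := by nlinarith
    have hhi : |(T + s) / 2| < 1 := abs_lt.2 ⟨by nlinarith, by nlinarith⟩
    exact ⟨_, _, hroot_sub, hroot_add, hhi.trans (by rw [abs_of_neg (by linarith)]; linarith),
      by rw [abs_of_neg (by linarith)]; linarith⟩
  · have hdominant (μ ν : ℝ) (hμν : μ * ν = D) (hlt : |ν| < |μ|) : 1 < |μ| := by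
      have : |μ| * |ν| = D := by rw [← abs_mul, hμν, abs_of_pos (by linarith)]
      nlinarith [abs_nonneg ν]
    rcases lt_trichotomy |(T - s) / 2| |(T + s) / 2| with hlt | heq | hgt
    · exact ⟨_, _, hroot_add, hroot_sub, hlt, hdominant _ _ (by linear_combination -hs2 / 4) hlt⟩
    · have := congrArg (· ^ 2) heq
      simp only [sq_abs] at this
      nlinarith
    · exact ⟨_, _, hroot_sub, hroot_add, hgt, hdominant _ _ (by linear_combination -hs2 / 4) hgt⟩

theorem exists_nonreal_expanding_almost_root {T D : ℝ} (hdisc : T ^ 2 ≤ 4 * D) (hD : 1 < D) :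
    ∃ z : ℂ, z.im ≠ 0 ∧ ‖z ^ 2 - T * z + D‖ < (‖z‖ - 1) * |z.im| := by
  set κ := (D - 1) / 4 with hκ_def
  have hκ : 0 < κ := div_pos (by linarith) four_pos
  set s := √(D - T ^ 2 / 4 + κ ^ 2)
  have hs2 : s ^ 2 = D - T ^ 2 / 4 + κ ^ 2 := Real.sq_sqrt (by nlinarith)
  have hκs : κ ≤ s := Real.le_sqrt_of_sq_le (by linarith)
  have hs : 0 < s := hκ.trans_le hκs
  -- `χ z = -κ²`, while `‖z‖ > 1 + κ` and `Im z ≥ κ`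
  refine ⟨⟨T / 2, s⟩, hs.ne', ?_⟩
  have hχ : (⟨T / 2, s⟩ : ℂ) ^ 2 - T * ⟨T / 2, s⟩ + D = ((-κ ^ 2 : ℝ) : ℂ) := by
    refine Complex.ext ?_ ?_
    · simp only [sq, Complex.add_re, Complex.sub_re, Complex.mul_re, Complex.ofReal_re,
        Complex.ofReal_im]
      linear_combination -hs2
    · simp only [sq, Complex.add_im, Complex.sub_im, Complex.mul_im, Complex.ofReal_re,
        Complex.ofReal_im]
      ring
  have hnorm : 1 + κ < ‖(⟨T / 2, s⟩ : ℂ)‖ := by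
    have : ‖(⟨T / 2, s⟩ : ℂ)‖ ^ 2 = D + κ ^ 2 := by
      rw [Complex.sq_norm, Complex.normSq_mk]; linarith
    nlinarith [norm_nonneg (⟨T / 2, s⟩ : ℂ)]
  rw [hχ, Complex.norm_real, Real.norm_eq_abs, abs_of_nonpos (by nlinarith), abs_of_pos hs]
  nlinarith

theorem unstableAtZero_of_hasFDerivAt_planarMap {f : ℝ × ℝ → ℝ × ℝ} {a b c d : ℝ}
    (hf : HasFDerivAt f (planarMap a b c d) 0) (hf0 : f 0 = 0) (hc : c ≠ 0)
    (h : (1 + (a + d) + (a * d - b * c) < 0 ∧ 0 < 1 - (a + d) + (a * d - b * c)) ∨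
      1 < a * d - b * c) :
    UnstableAtZero f := by
  rcases lt_or_ge (4 * (a * d - b * c)) ((a + d) ^ 2) with hdisc | hdisc
  · obtain ⟨μ, ν, hμ, hν, hνμ, hμ1⟩ := exists_dominant_roots hdisc h
    exact unstableAtZero_of_dominant_root hf hf0 hc hμ hν hνμ hμ1
  · have hD : 1 < a * d - b * c :=
      h.resolve_left fun ⟨h₁, _⟩ => by nlinarith [sq_nonneg (a + d + 2)]
    obtain ⟨z, hz, hgrowth⟩ := exists_nonreal_expanding_almost_root hdisc hD
    exact unstableAtZero_of_expanding_almost_root hf hf0 hc hz hgrowth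

def modelMap (α J lam : ℝ) (Φ : ℝ → ℝ) (x : ℝ × ℝ) : ℝ × ℝ :=
  (x.1 + lam * x.2,
    α * (1 - 2 * Φ (x.1 + (lam - J) * x.2)) + (1 - α) * (1 - 2 * Φ (x.1 + lam * x.2)))

theorem modelMap_zero (α J lam : ℝ) {Φ : ℝ → ℝ} (hΦ0 : Φ 0 = 1 / 2) :
    modelMap α J lam Φ 0 = 0 := by
  simp [modelMap, hΦ0]

theorem hasFDerivAt_modelMap (α J lam : ℝ) {Φ : ℝ → ℝ} {φ : ℝ} (hΦ : HasDerivAt Φ φ 0) :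
    HasFDerivAt (modelMap α J lam Φ)
      (planarMap 1 lam (-(2 * φ)) (-(2 * φ * (lam - α * J)))) 0 := by
  have hlin (m : ℝ) :
      HasFDerivAt (fun x : ℝ × ℝ => x.1 + m * x.2) (fst ℝ ℝ ℝ + m • snd ℝ ℝ ℝ) 0 :=
    hasFDerivAt_fst.add (hasFDerivAt_snd.const_mul m)
  have hΦlin (m : ℝ) :=
    ((hΦ.comp_hasFDerivAt_of_eq (0 : ℝ × ℝ) (hlin m) (by simp)).const_mul 2).const_sub 1
  refine ((hlin lam).prodMk (((hΦlin (lam - J)).const_mul α).add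
    ((hΦlin lam).const_mul (1 - α)))).congr_fderiv (ContinuousLinearMap.ext fun v => ?_)
  simp only [planarMap_apply, ContinuousLinearMap.prod_apply, add_apply, smul_apply, neg_apply,
    coe_fst', coe_snd', smul_eq_mul]
  ext <;> ring

theorem origin_unstable_general
    (α J lam : ℝ) (Φ Φ' : ℝ → ℝ)
    (hlam : 0 < lam)
    (hmono : Monotone Φ)
    (hderiv : ∀ x, HasDerivAt Φ (Φ' x) x)
    (hΦ0 : Φ 0 = 1 / 2)
    (Ψ : ℝ × ℝ → ℝ × ℝ)
    (hΨ : ∀ x : ℝ × ℝ, Ψ x =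
      (x.1 + lam * x.2,
       α * (1 - 2 * Φ (x.1 + (lam - J) * x.2))
         + (1 - α) * (1 - 2 * Φ (x.1 + lam * x.2))))
    (hyp : 1 + 2 * α * J * Φ' 0 < lam * Φ' 0 ∨
      (lam * Φ' 0 ≤ 1 + 2 * α * J * Φ' 0 ∧ 1 < 2 * α * J * Φ' 0)) :
    ∃ ε > (0 : ℝ), ∀ δ > (0 : ℝ), ∃ s : ℕ → ℝ × ℝ,
      (∀ n : ℕ, s (n + 1) = Ψ (s n)) ∧ ‖s 0‖ < δ ∧
      ∃ n : ℕ, 1 ≤ n ∧ ε ≤ ‖s n‖ := by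
  obtain rfl : Ψ = modelMap α J lam Φ := funext hΨ
  have hφ : 0 < Φ' 0 := by
    refine ((hderiv 0).nonneg_of_monotone hmono).lt_of_ne' fun h => ?_
    rw [h] at hyp
    norm_num at hyp
  refine unstableAtZero_of_hasFDerivAt_planarMap (hasFDerivAt_modelMap α J lam (hderiv 0))
    (modelMap_zero α J lam hΦ0) (neg_ne_zero.2 (by positivity)) ?_
  rcases hyp with hyp | hyp
  · left
    constructor <;> nlinarith
  · right
    linarith [hyp.2]

/-- If λΦ′(0) > 1 + 2αJΦ′(0), or λΦ′(0) ≤ 1 + 2αJΦ′(0) and 2αJΦ′(0) > 1,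
then the origin is an unstable equilibrium of the dynamical system generated by Ψ. -/
theorem origin_unstable
    (α J lam : ℝ) (Φ Φ' : ℝ → ℝ)
    (hα : 0 < α) (hα1 : α < 1) (hJ : 0 < J) (hlam : 0 < lam)
    (hmono : Monotone Φ)
    (hbot : Filter.Tendsto Φ Filter.atBot (nhds 0))
    (htop : Filter.Tendsto Φ Filter.atTop (nhds 1))
    (hderiv : ∀ x, HasDerivAt Φ (Φ' x) x)
    (hmax : ∀ x, Φ' x ≤ Φ' 0)
    (hincr : StrictMonoOn Φ' (Set.Iio (0 : ℝ)))
    (hdecr : StrictAntiOn Φ' (Set.Ioi (0 : ℝ)))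
    (hΦ0 : Φ 0 = 1 / 2)
    (hC2 : ∃ U ∈ nhds (0 : ℝ), ContDiffOn ℝ 2 Φ U)
    (Ψ : ℝ × ℝ → ℝ × ℝ)
    (hΨ : ∀ x : ℝ × ℝ, Ψ x =
      (x.1 + lam * x.2,
       α * (1 - 2 * Φ (x.1 + (lam - J) * x.2))
         + (1 - α) * (1 - 2 * Φ (x.1 + lam * x.2))))
    (hyp : 1 + 2 * α * J * Φ' 0 < lam * Φ' 0 ∨
      (lam * Φ' 0 ≤ 1 + 2 * α * J * Φ' 0 ∧ 1 < 2 * α * J * Φ' 0)) :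
    ∃ ε > (0 : ℝ), ∀ δ > (0 : ℝ), ∃ s : ℕ → ℝ × ℝ,
      (∀ n : ℕ, s (n + 1) = Ψ (s n)) ∧ ‖s 0‖ < δ ∧
      ∃ n : ℕ, 1 ≤ n ∧ ε ≤ ‖s n‖ :=
  origin_unstable_general α J lam Φ Φ' hlam hmono hderiv hΦ0 Ψ hΨ hyp
end

section
/- If Δ > 0, 2λc < 1 + 2αJc and 2αJc < 1, then both roots of the quadratic Q are real and have absolute value strictly less than 1; more precisely, |μ₂| < μ₁ < 1. -/
/-- Case 2: if Δ > 0, 2λc < 1 + 2αJc and 2αJc < 1, then both (real) roots of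
the quadratic have absolute value strictly less than 1; more precisely |μ₂| < μ₁ < 1. -/
theorem quadratic_roots_case2
    (c α J lam : ℝ)
    (hc : 0 < c) (hα : 0 < α) (hα1 : α < 1) (hJ : 0 < J) (hlam : 0 < lam)
    (Δ μ₁ μ₂ : ℝ)
    (hΔdef : Δ = (1 + 2 * (α * J - lam) * c) ^ 2 - 8 * α * J * c)
    (hμ₁ : μ₁ = (1 + 2 * (α * J - lam) * c + Real.sqrt Δ) / 2)
    (hμ₂ : μ₂ = (1 + 2 * (α * J - lam) * c - Real.sqrt Δ) / 2)
    (hΔ : 0 < Δ)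
    (h1 : 2 * lam * c < 1 + 2 * α * J * c)
    (h2 : 2 * α * J * c < 1) :
    μ₁ ^ 2 - (1 + 2 * (α * J - lam) * c) * μ₁ + 2 * α * J * c = 0 ∧
    μ₂ ^ 2 - (1 + 2 * (α * J - lam) * c) * μ₂ + 2 * α * J * c = 0 ∧
    |μ₂| < μ₁ ∧ μ₁ < 1 := by
  have hs : Real.sqrt Δ ^ 2 = Δ := Real.sq_sqrt hΔ.le
  have hspos : 0 < Real.sqrt Δ := Real.sqrt_pos.mpr hΔ
  have hprod : 0 < α * J * c := by positivity
  have hb : 0 < 1 + 2 * (α * J - lam) * c := by nlinarith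
  have hsb : Real.sqrt Δ < 1 + 2 * (α * J - lam) * c := by nlinarith
  have hμ₂pos : 0 < μ₂ := by rw [hμ₂]; nlinarith
  refine ⟨by rw [hμ₁]; nlinarith, by rw [hμ₂]; nlinarith, ?_, ?_⟩
  · rw [abs_of_pos hμ₂pos, hμ₁, hμ₂]; linarith
  · rw [hμ₁]
    have h2b : 0 < 2 - (1 + 2 * (α * J - lam) * c) := by nlinarith
    have hΔlt : Δ < (2 - (1 + 2 * (α * J - lam) * c)) ^ 2 := by nlinarith
    have : Real.sqrt Δ < 2 - (1 + 2 * (α * J - lam) * c) := by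
      calc Real.sqrt Δ < Real.sqrt ((2 - (1 + 2 * (α * J - lam) * c)) ^ 2) :=
            Real.sqrt_lt_sqrt hΔ.le hΔlt
        _ = 2 - (1 + 2 * (α * J - lam) * c) := by
            rw [Real.sqrt_sq h2b.le]
    linarith
end

section
/- If Δ > 0, 1 + 2αJc < 2λc < 2 + 4αJc and 2αJc < 1, then both roots of the quadratic Q are real and have absolute value strictly less than 1; more precisely, |μ₁| < |μ₂| < 1, where μ₂ > −1. -/
/-- Case 3: if Δ > 0, 1 + 2αJc < 2λc < 2 + 4αJc and 2αJc < 1, then both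
(real) roots of the quadratic have absolute value strictly less than 1;
more precisely |μ₁| < |μ₂| < 1, where μ₂ > −1. -/
theorem quadratic_roots_case3
    (c α J lam : ℝ)
    (hc : 0 < c) (hα : 0 < α) (hα1 : α < 1) (hJ : 0 < J) (hlam : 0 < lam)
    (Δ μ₁ μ₂ : ℝ)
    (hΔdef : Δ = (1 + 2 * (α * J - lam) * c) ^ 2 - 8 * α * J * c)
    (hμ₁ : μ₁ = (1 + 2 * (α * J - lam) * c + Real.sqrt Δ) / 2)
    (hμ₂ : μ₂ = (1 + 2 * (α * J - lam) * c - Real.sqrt Δ) / 2)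
    (hΔ : 0 < Δ)
    (h1 : 1 + 2 * α * J * c < 2 * lam * c)
    (h2 : 2 * lam * c < 2 + 4 * α * J * c)
    (h3 : 2 * α * J * c < 1) :
    μ₁ ^ 2 - (1 + 2 * (α * J - lam) * c) * μ₁ + 2 * α * J * c = 0 ∧
    μ₂ ^ 2 - (1 + 2 * (α * J - lam) * c) * μ₂ + 2 * α * J * c = 0 ∧
    |μ₁| < |μ₂| ∧ |μ₂| < 1 ∧ -1 < μ₂ := by
  set b : ℝ := 1 + 2 * (α * J - lam) * c with hb
  set s : ℝ := Real.sqrt Δ with hsdef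
  have hs0 : 0 < s := Real.sqrt_pos.mpr hΔ
  have hs2 : s ^ 2 = Δ := Real.sq_sqrt hΔ.le
  have hp : 0 < 2 * α * J * c := by positivity
  have hbneg : b < 0 := by rw [hb]; nlinarith
  -- s < -b
  have hslt : s < -b := by nlinarith [hs2, hΔdef]
  -- s < b + 2
  have hslt2 : s < b + 2 := by nlinarith [hs2, hΔdef]
  have hμ₁neg : μ₁ < 0 := by rw [hμ₁]; linarith
  have hμ₂lt : μ₂ < μ₁ := by rw [hμ₁, hμ₂]; linarith
  have hμ₂gt : -1 < μ₂ := by rw [hμ₂]; linarith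
  refine ⟨?_, ?_, ?_, ?_, hμ₂gt⟩
  · rw [hμ₁]; linear_combination hs2/4 + hΔdef/4
  · rw [hμ₂]; linear_combination hs2/4 + hΔdef/4
  · rw [abs_of_neg hμ₁neg, abs_of_neg (hμ₂lt.trans hμ₁neg)]; linarith
  · rw [abs_of_neg (hμ₂lt.trans hμ₁neg)]; linarith
end

section
/- If Δ > 0, 1 + 2αJc < 2λc ≤ 2 + 4αJc and 2αJc > 1, then the smaller real root of the quadratic Q satisfies μ₂ < −1. (In particular, 2λc > (1 + √(2αJc))² must hold under these hypotheses.) -/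
/-- Case 5: if Δ > 0, 1 + 2αJc < 2λc ≤ 2 + 4αJc and 2αJc > 1, then the smaller
real root of the quadratic satisfies μ₂ < −1; in particular
2λc > (1 + √(2αJc))² must hold. -/
theorem quadratic_roots_case5
    (c α J lam : ℝ)
    (hc : 0 < c) (hα : 0 < α) (hα1 : α < 1) (hJ : 0 < J) (hlam : 0 < lam)
    (Δ μ₂ : ℝ)
    (hΔdef : Δ = (1 + 2 * (α * J - lam) * c) ^ 2 - 8 * α * J * c)
    (hμ₂ : μ₂ = (1 + 2 * (α * J - lam) * c - Real.sqrt Δ) / 2)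
    (hΔ : 0 < Δ)
    (h1 : 1 + 2 * α * J * c < 2 * lam * c)
    (h2 : 2 * lam * c ≤ 2 + 4 * α * J * c)
    (h3 : 1 < 2 * α * J * c) :
    μ₂ < -1 ∧ (1 + Real.sqrt (2 * α * J * c)) ^ 2 < 2 * lam * c := by
  set s := Real.sqrt (2 * α * J * c) with hs
  have ha : (0:ℝ) ≤ 2 * α * J * c := by positivity
  have hs2 : s ^ 2 = 2 * α * J * c := Real.sq_sqrt ha
  have hs0 : 0 ≤ s := Real.sqrt_nonneg _
  set t := 1 + 2 * (α * J - lam) * c with ht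
  have htneg : t < 0 := by simp only [ht]; nlinarith
  have htΔ : t ^ 2 - 4 * s ^ 2 > 0 := by
    rw [hs2]; nlinarith [hΔ, hΔdef]
  have hkey : 2 * s < -t := by nlinarith
  have hsqΔ : 0 ≤ Real.sqrt Δ := Real.sqrt_nonneg _
  have hs1 : 1 < s := by nlinarith
  constructor
  · rw [hμ₂]; nlinarith
  · nlinarith
end

section
/- If Δ > 0 and 2λc > 2 + 4αJc, then the smaller real root of the quadratic Q satisfies μ₂ < −1. -/
/-- Case 6: if Δ > 0 and 2λc > 2 + 4αJc, then the smaller real root of the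
quadratic satisfies μ₂ < −1. -/
theorem quadratic_roots_case6
    (c α J lam : ℝ)
    (hc : 0 < c) (hα : 0 < α) (hα1 : α < 1) (hJ : 0 < J) (hlam : 0 < lam)
    (Δ μ₂ : ℝ)
    (hΔdef : Δ = (1 + 2 * (α * J - lam) * c) ^ 2 - 8 * α * J * c)
    (hμ₂ : μ₂ = (1 + 2 * (α * J - lam) * c - Real.sqrt Δ) / 2)
    (hΔ : 0 < Δ)
    (h1 : 2 + 4 * α * J * c < 2 * lam * c) :
    μ₂ < -1 := by
  have hs : Real.sqrt Δ ^ 2 = Δ := Real.sq_sqrt hΔ.le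
  have hpos : 0 < Real.sqrt Δ := Real.sqrt_pos.mpr hΔ
  subst hμ₂ hΔdef
  nlinarith [hs, hpos, sq_nonneg (Real.sqrt ((1 + 2 * (α * J - lam) * c) ^ 2 - 8 * α * J * c) - (1 + 2 * (α * J - lam) * c + 2)), sq_nonneg (Real.sqrt ((1 + 2 * (α * J - lam) * c) ^ 2 - 8 * α * J * c) + (1 + 2 * (α * J - lam) * c + 2))]
end

section
/- Assume b := 2αJΦ′(0) < 1. If p ≤ p′, d is the fixed point of g_p (i.e. g_p(d) = d) and d′ is the fixed point of g_{p′} (i.e. g_{p′}(d′) = d′), then d ≥ d′. Consequently, if g_p(d) = d then p ≥ 0 implies d ≤ 0 and p ≤ 0 implies d ≥ 0. -/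
/-- Monotonicity of the fixed point of g_p in p: if p ≤ p′ then the fixed
points satisfy D(p) ≥ D(p′); consequently p ≥ 0 implies D(p) ≤ 0 and p ≤ 0
implies D(p) ≥ 0. -/
theorem g_fixed_point_monotone
    (α J lam : ℝ) (Φ Φ' : ℝ → ℝ)
    (hα : 0 < α) (hα1 : α < 1) (hJ : 0 < J) (hlam : 0 < lam)
    (hmono : Monotone Φ)
    (hbot : Filter.Tendsto Φ Filter.atBot (nhds 0))
    (htop : Filter.Tendsto Φ Filter.atTop (nhds 1))
    (hderiv : ∀ x, HasDerivAt Φ (Φ' x) x)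
    (hmax : ∀ x, Φ' x ≤ Φ' 0)
    (hincr : StrictMonoOn Φ' (Set.Iio (0 : ℝ)))
    (hdecr : StrictAntiOn Φ' (Set.Ioi (0 : ℝ)))
    (hΦ0 : Φ 0 = 1 / 2)
    (hb : 2 * α * J * Φ' 0 < 1)
    (g : ℝ → ℝ → ℝ)
    (hg : ∀ p d : ℝ, g p d = α * (1 - 2 * Φ (p - J * d)) + (1 - α) * (1 - 2 * Φ p)) :
    (∀ p p' d d' : ℝ, p ≤ p' → g p d = d → g p' d' = d' → d' ≤ d) ∧
    (∀ p d : ℝ, g p d = d → (0 ≤ p → d ≤ 0) ∧ (p ≤ 0 → 0 ≤ d)) := by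
  -- Lipschitz-type bound from the mean value theorem
  have lip : ∀ x y : ℝ, x ≤ y → Φ y - Φ x ≤ Φ' 0 * (y - x) := by
    intro x y hxy
    rcases eq_or_lt_of_le hxy with rfl | hlt
    · simp
    · obtain ⟨c, _, hc⟩ := exists_hasDerivAt_eq_slope Φ Φ' hlt
        (fun z _ => (hderiv z).continuousAt.continuousWithinAt)
        (fun z _ => hderiv z)
      have h := hmax c
      have hyx : 0 < y - x := by linarith
      have : Φ y - Φ x = Φ' c * (y - x) := by
        field_simp at hc; linarith [hc]
      rw [this]
      nlinarith
  have main : ∀ p p' d d' : ℝ, p ≤ p' → g p d = d → g p' d' = d' → d' ≤ d := by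
    intro p p' d d' hpp hd hd'
    by_contra hcon
    push_neg at hcon
    rw [hg] at hd hd'
    have h1 : Φ p ≤ Φ p' := hmono hpp
    have h2 : Φ (p - J * d) ≤ Φ (p' - J * d) := hmono (by linarith)
    have h3 : Φ (p' - J * d) - Φ (p' - J * d') ≤ Φ' 0 * ((p' - J * d) - (p' - J * d')) := by
      apply lip
      nlinarith
    have hΦ'0 : 0 ≤ Φ' 0 := by
      have h01 := lip 0 1 zero_le_one
      have := hmono (zero_le_one (α := ℝ))
      linarith
    nlinarith
  refine ⟨main, fun p d hd => ?_⟩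
  have h0 : g 0 0 = 0 := by
    rw [hg]
    simp [hΦ0]
  exact ⟨fun hp => main 0 p 0 d hp h0 hd, fun hp => main p 0 d 0 hp hd h0⟩
end

section
/- Assume b := 2αJΦ′(0) < 1. If p ≥ 0 and d ∈ ℝ satisfies g_p(d) = d, then d ≥ −(b/(Jα(1−b)))·p; and if p ≤ 0 and g_p(d) = d, then d ≤ −(b/(Jα(1−b)))·p. -/
/-- Lemma estAh: if p ≥ 0 then the fixed point d of g_p satisfies
d ≥ −(b/(Jα(1−b)))p, and if p ≤ 0 then d ≤ −(b/(Jα(1−b)))p, where b = 2αJΦ′(0). -/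
theorem g_fixed_point_bound
    (α J lam : ℝ) (Φ Φ' : ℝ → ℝ)
    (hα : 0 < α) (hα1 : α < 1) (hJ : 0 < J) (hlam : 0 < lam)
    (hmono : Monotone Φ)
    (hbot : Filter.Tendsto Φ Filter.atBot (nhds 0))
    (htop : Filter.Tendsto Φ Filter.atTop (nhds 1))
    (hderiv : ∀ x, HasDerivAt Φ (Φ' x) x)
    (hmax : ∀ x, Φ' x ≤ Φ' 0)
    (hincr : StrictMonoOn Φ' (Set.Iio (0 : ℝ)))
    (hdecr : StrictAntiOn Φ' (Set.Ioi (0 : ℝ)))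
    (hΦ0 : Φ 0 = 1 / 2)
    (b : ℝ) (hbdef : b = 2 * α * J * Φ' 0) (hb : b < 1)
    (g : ℝ → ℝ → ℝ)
    (hg : ∀ p d : ℝ, g p d = α * (1 - 2 * Φ (p - J * d)) + (1 - α) * (1 - 2 * Φ p)) :
    ∀ p d : ℝ, g p d = d →
      (0 ≤ p → -(b / (J * α * (1 - b))) * p ≤ d) ∧
      (p ≤ 0 → d ≤ -(b / (J * α * (1 - b))) * p) := by
  -- the auxiliary function t ↦ Φ'(0)·t − Φ(t) is monotone
  have hmonoH : Monotone (fun t : ℝ => Φ' 0 * t - Φ t) := by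
    have hdiff : ∀ t : ℝ, HasDerivAt (fun t : ℝ => Φ' 0 * t - Φ t) (Φ' 0 - Φ' t) t := by
      intro t
      have h1 : HasDerivAt (fun t : ℝ => Φ' 0 * t) (Φ' 0) t := by
        simpa using (hasDerivAt_id t).const_mul (Φ' 0)
      exact h1.sub (hderiv t)
    have : ∀ t : ℝ, 0 ≤ deriv (fun t : ℝ => Φ' 0 * t - Φ t) t := by
      intro t
      rw [(hdiff t).deriv]
      have := hmax t
      linarith
    exact monotone_of_deriv_nonneg (fun t => (hdiff t).differentiableAt) this
  -- Lipschitz-type bound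
  have key : ∀ x y : ℝ, x ≤ y → Φ y - Φ x ≤ Φ' 0 * (y - x) := by
    intro x y hxy
    have := hmonoH hxy
    simp only at this
    nlinarith
  -- Φ' 0 ≥ 0
  have hΦ'0 : 0 ≤ Φ' 0 := by
    have h1 := key 0 1 (by norm_num)
    have h2 : Φ 0 ≤ Φ 1 := hmono (by norm_num)
    nlinarith
  have h1b : 0 < 1 - b := by linarith
  have hJα : 0 < J * α * (1 - b) := by positivity
  have hcoef : b / (J * α * (1 - b)) = 2 * Φ' 0 / (1 - b) := by
    rw [div_eq_div_iff hJα.ne' h1b.ne', hbdef]; ring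
  intro p d hfix
  have hEq : d = α * (1 - 2 * Φ (p - J * d)) + (1 - α) * (1 - 2 * Φ p) := by
    rw [← hg]; exact hfix.symm
  constructor
  · intro hp
    rcases le_or_gt 0 d with hd | hd
    · have : 0 ≤ b / (J * α * (1 - b)) * p := by
        apply mul_nonneg _ hp
        apply div_nonneg _ hJα.le
        rw [hbdef]; positivity
      linarith
    · -- d < 0, so p - J*d ≥ 0 and p ≥ 0
      have h1 : Φ (p - J * d) - Φ 0 ≤ Φ' 0 * (p - J * d) := by
        have := key 0 (p - J * d) (by nlinarith)
        rw [sub_zero] at this; exact this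
      have h2 : Φ p - Φ 0 ≤ Φ' 0 * p := by
        have := key 0 p hp
        rw [sub_zero] at this; exact this
      have hmain : -(2 * Φ' 0 * p) ≤ (1 - b) * d := by
        rw [hbdef]; nlinarith
      rw [hcoef, neg_mul, neg_le, div_mul_eq_mul_div, le_div_iff₀ h1b]
      nlinarith [hmain]
  · intro hp
    rcases le_or_gt d 0 with hd | hd
    · have : 0 ≤ -(b / (J * α * (1 - b))) * p := by
        rw [neg_mul]
        apply neg_nonneg.mpr
        apply mul_nonpos_of_nonneg_of_nonpos _ hp
        apply div_nonneg _ hJα.le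
        rw [hbdef]; positivity
      linarith
    · -- d > 0, so p - J*d ≤ 0 and p ≤ 0
      have h1 : Φ 0 - Φ (p - J * d) ≤ Φ' 0 * (0 - (p - J * d)) := by
        exact key (p - J * d) 0 (by nlinarith)
      have h2 : Φ 0 - Φ p ≤ Φ' 0 * (0 - p) := by
        exact key p 0 hp
      have hmain : (1 - b) * d ≤ -(2 * Φ' 0 * p) := by
        rw [hbdef]; nlinarith
      rw [hcoef, neg_mul, le_neg, div_mul_eq_mul_div, div_le_iff₀ h1b]
      nlinarith [hmain]
end

section
/- Assume b := 2αJΦ′(0) < 1 and set a := b/2. Let x_ℓ < 0 < x_r be the negative and positive solutions of 2αJΦ′(x) = a, and set h := min(α/(2(1−α)), 1) · min(|x_ℓ|, x_r). If 0 ≤ p ≤ h and r ∈ ℝ satisfies g_p(r) = 0, then r ≤ 2p/(αJ); and if −h ≤ p ≤ 0 and g_p(r) = 0, then r ≥ 2p/(αJ). -/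
/-!
Since `Φ` is strictly increasing, `g_p` is strictly increasing in `d`, so for `p ≥ 0` it suffices
to show `g_p(2p/(αJ)) ≥ 0`. With `q = p - 2p/α` and `Φ(0) = 1/2`, this is
`α (Φ 0 - Φ q) ≥ (1 - α) (Φ p - Φ 0)`. The right side is at most `(1 - α) Φ'(0) p` because `Φ'`
peaks at `0`; the left side is at least `α Φ'(0)/2 · min (-q, -x_ℓ)` because `Φ' ≥ Φ'(0)/2` on
`[x_ℓ, 0]`, and the choice of `h` makes the second bound dominate the first.
The case `p ≤ 0` is the same statement for the reflected profile `x ↦ 1 - Φ (-x)`.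
-/

open Set

/-- The paper's `g_p(d)`. -/
noncomputable def gFun (α J : ℝ) (Φ : ℝ → ℝ) (p d : ℝ) : ℝ :=
  α * (1 - 2 * Φ (p - J * d)) + (1 - α) * (1 - 2 * Φ p)

lemma gFun_strictMono {α J : ℝ} {Φ : ℝ → ℝ} (hα : 0 < α) (hJ : 0 < J) (hΦ : StrictMono Φ)
    (p : ℝ) : StrictMono (gFun α J Φ p) := by
  intro d e hde
  have : Φ (p - J * e) < Φ (p - J * d) := hΦ (by nlinarith)
  unfold gFun
  nlinarith

lemma gFun_reflect (α J : ℝ) (Φ : ℝ → ℝ) (p d : ℝ) :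
    gFun α J (fun x => 1 - Φ (-x)) p d = -gFun α J Φ (-p) (-d) := by
  have harg : -(p - J * d) = -p - J * -d := by ring
  simp only [gFun, harg]
  ring

lemma pos_of_strictMonoOn_Iio_of_strictAntiOn_Ioi {f : ℝ → ℝ} (hf : 0 ≤ f)
    (hmax : ∀ x, f x ≤ f 0) (hinc : StrictMonoOn f (Iio 0)) (hdec : StrictAntiOn f (Ioi 0))
    (x : ℝ) : 0 < f x := by
  have hneg : ∀ y < 0, 0 < f y := fun y hy =>
    (hf (y - 1)).trans_lt (hinc (mem_Iio.2 (by linarith)) hy (by linarith))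
  rcases lt_trichotomy x 0 with hx | rfl | hx
  · exact hneg x hx
  · exact (hneg (-1) (by norm_num)).trans_le (hmax _)
  · exact (hf (x + 1)).trans_lt (hdec hx (mem_Ioi.2 (by linarith)) (by linarith))

lemma sub_le_mul_sub_of_hasDerivAt_le {f f' : ℝ → ℝ} (hf : ∀ x, HasDerivAt f (f' x) x)
    {C u v : ℝ} (huv : u ≤ v) (hC : ∀ x ∈ Ioo u v, f' x ≤ C) : f v - f u ≤ C * (v - u) := by
  refine (convex_Icc u v).image_sub_le_mul_sub_of_deriv_le
    (fun x _ => (hf x).continuousAt.continuousWithinAt)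
    (fun x _ => (hf x).differentiableAt.differentiableWithinAt) (fun x hx => ?_)
    u (left_mem_Icc.2 huv) v (right_mem_Icc.2 huv) huv
  rw [interior_Icc] at hx
  exact (hf x).deriv ▸ hC x hx

lemma mul_sub_le_sub_of_le_hasDerivAt {f f' : ℝ → ℝ} (hf : ∀ x, HasDerivAt f (f' x) x)
    {m u v : ℝ} (huv : u ≤ v) (hm : ∀ x ∈ Ioo u v, m ≤ f' x) : m * (v - u) ≤ f v - f u := by
  refine (convex_Icc u v).mul_sub_le_image_sub_of_le_deriv
    (fun x _ => (hf x).continuousAt.continuousWithinAt)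
    (fun x _ => (hf x).differentiableAt.differentiableWithinAt) (fun x hx => ?_)
    u (left_mem_Icc.2 huv) v (right_mem_Icc.2 huv) huv
  rw [interior_Icc] at hx
  exact (hf x).deriv ▸ hm x hx

/-- Below `a`, where no lower bound on `f'` is available, monotonicity of `f` takes over. -/
lemma mul_min_le_sub_of_le_hasDerivAt {f f' : ℝ → ℝ} (hf : ∀ x, HasDerivAt f (f' x) x)
    (hmono : Monotone f) {m a b q : ℝ} (hab : a ≤ b) (hqb : q ≤ b)
    (hm : ∀ x ∈ Ioo a b, m ≤ f' x) : m * min (b - q) (b - a) ≤ f b - f q := by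
  have hmin : min (b - q) (b - a) = b - max q a := min_sub_sub_left b q a
  have hsub : Ioo (max q a) b ⊆ Ioo a b := Ioo_subset_Ioo_left (le_max_right q a)
  calc m * min (b - q) (b - a) = m * (b - max q a) := by rw [hmin]
    _ ≤ f b - f (max q a) :=
        mul_sub_le_sub_of_le_hasDerivAt hf (max_le hqb hab) fun x hx => hm x (hsub hx)
    _ ≤ f b - f q := by linarith [hmono (le_max_left q a)]

lemma one_sub_mul_le_mul_min {α p xl : ℝ} (hα : 0 < α) (hα1 : α < 1) (hp0 : 0 ≤ p)
    (hp : p ≤ α / (2 * (1 - α)) * -xl) : (1 - α) * p ≤ α / 2 * min (2 * p / α - p) (-xl) := by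
  rw [mul_min_of_nonneg _ _ (by positivity)]
  refine le_min ?_ ?_
  · have : α / 2 * (2 * p / α - p) = p - α / 2 * p := by field_simp
    nlinarith
  · have h1α : 0 < 2 * (1 - α) := by linarith
    rw [div_mul_eq_mul_div, le_div_iff₀ h1α] at hp
    linarith

theorem le_of_gFun_eq_zero {α J c xl p r : ℝ} {Φ Φ' : ℝ → ℝ} (hα : 0 < α) (hα1 : α < 1)
    (hJ : 0 < J) (hΦ : ∀ x, HasDerivAt Φ (Φ' x) x) (hΦmono : StrictMono Φ) (hΦ0 : Φ 0 = 1 / 2)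
    (hc : 0 ≤ c) (hup : ∀ x ∈ Ioo 0 p, Φ' x ≤ c) (hxl : xl ≤ 0)
    (hlow : ∀ x ∈ Ioo xl 0, c / 2 ≤ Φ' x) (hp0 : 0 ≤ p) (hp : p ≤ α / (2 * (1 - α)) * -xl)
    (hr : gFun α J Φ p r = 0) : r ≤ 2 * p / (α * J) := by
  have hq : p - J * (2 * p / (α * J)) = p - 2 * p / α := by field_simp
  have hq0 : p - 2 * p / α ≤ 0 := by
    have : p ≤ 2 * p / α := by rw [le_div_iff₀ hα]; nlinarith
    linarith
  have hright : Φ p - Φ 0 ≤ c * p := by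
    simpa using sub_le_mul_sub_of_hasDerivAt_le hΦ hp0 hup
  have hleft : c / 2 * min (2 * p / α - p) (-xl) ≤ Φ 0 - Φ (p - 2 * p / α) := by
    simpa only [zero_sub, neg_sub] using
      mul_min_le_sub_of_le_hasDerivAt hΦ hΦmono.monotone hxl hq0 hlow
  have harith := mul_le_mul_of_nonneg_left (one_sub_mul_le_mul_min hα hα1 hp0 hp) hc
  have hnonneg : 0 ≤ gFun α J Φ p (2 * p / (α * J)) := by
    rw [gFun, hq]
    nlinarith
  exact (gFun_strictMono hα hJ hΦmono p).le_iff_le.mp (hr ▸ hnonneg)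

theorem ge_of_gFun_eq_zero {α J c xr p r : ℝ} {Φ Φ' : ℝ → ℝ} (hα : 0 < α) (hα1 : α < 1)
    (hJ : 0 < J) (hΦ : ∀ x, HasDerivAt Φ (Φ' x) x) (hΦmono : StrictMono Φ) (hΦ0 : Φ 0 = 1 / 2)
    (hc : 0 ≤ c) (hup : ∀ x ∈ Ioo p 0, Φ' x ≤ c) (hxr : 0 ≤ xr)
    (hlow : ∀ x ∈ Ioo 0 xr, c / 2 ≤ Φ' x) (hp_nonpos : p ≤ 0) (hp : -p ≤ α / (2 * (1 - α)) * xr)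
    (hr : gFun α J Φ p r = 0) : 2 * p / (α * J) ≤ r := by
  have hreflect := le_of_gFun_eq_zero (Φ := fun x => 1 - Φ (-x)) (Φ' := fun x => Φ' (-x))
    (xl := -xr) (p := -p) (r := -r) hα hα1 hJ
    (fun x => by simpa using ((hΦ (-x)).comp x (hasDerivAt_neg x)).const_sub 1)
    (fun a b hab => sub_lt_sub_left (hΦmono (neg_lt_neg hab)) 1)
    (by norm_num [hΦ0]) hc
    (fun x hx => hup (-x) ⟨by linarith [hx.2], by linarith [hx.1]⟩) (neg_nonpos.2 hxr)
    (fun x hx => hlow (-x) ⟨by linarith [hx.2], by linarith [hx.1]⟩) (neg_nonneg.2 hp_nonpos)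
    (by rwa [neg_neg]) (by rw [gFun_reflect, neg_neg, neg_neg, hr, neg_zero])
  rw [mul_neg, neg_div] at hreflect
  linarith

theorem g_zero_upper_bound_general
    (α J : ℝ) (Φ Φ' : ℝ → ℝ)
    (hα : 0 < α) (hα1 : α < 1) (hJ : 0 < J)
    (hmono : Monotone Φ)
    (hderiv : ∀ x, HasDerivAt Φ (Φ' x) x)
    (hmax : ∀ x, Φ' x ≤ Φ' 0)
    (hincr : StrictMonoOn Φ' (Set.Iio (0 : ℝ)))
    (hdecr : StrictAntiOn Φ' (Set.Ioi (0 : ℝ)))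
    (hΦ0 : Φ 0 = 1 / 2)
    (b a : ℝ) (hbdef : b = 2 * α * J * Φ' 0) (hadef : a = b / 2)
    (xl xr : ℝ) (hxl : xl < 0) (hxr : 0 < xr)
    (hxla : 2 * α * J * Φ' xl = a) (hxra : 2 * α * J * Φ' xr = a)
    (h : ℝ) (hhdef : h = min (α / (2 * (1 - α))) 1 * min |xl| xr)
    (g : ℝ → ℝ → ℝ)
    (hg : ∀ p d : ℝ, g p d = α * (1 - 2 * Φ (p - J * d)) + (1 - α) * (1 - 2 * Φ p)) :
    ∀ p r : ℝ, g p r = 0 →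
      (0 ≤ p → p ≤ h → r ≤ 2 * p / (α * J)) ∧
      (-h ≤ p → p ≤ 0 → 2 * p / (α * J) ≤ r) := by
  have hpos := pos_of_strictMonoOn_Iio_of_strictAntiOn_Ioi
    (fun x => (hderiv x).deriv ▸ hmono.deriv_nonneg) hmax hincr hdecr
  have hΦmono : StrictMono Φ := strictMono_of_hasDerivAt_pos hderiv hpos
  have hαJ : 2 * α * J ≠ 0 := by positivity
  have hxl_half : Φ' xl = Φ' 0 / 2 := mul_left_cancel₀ hαJ (by rw [hxla, hadef, hbdef]; ring)
  have hxr_half : Φ' xr = Φ' 0 / 2 := mul_left_cancel₀ hαJ (by rw [hxra, hadef, hbdef]; ring)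
  have hfac : 0 ≤ α / (2 * (1 - α)) := div_nonneg hα.le (by linarith)
  have hhl : h ≤ α / (2 * (1 - α)) * -xl := by
    rw [hhdef, abs_of_neg hxl]
    exact mul_le_mul (min_le_left _ _) (min_le_left _ _) (le_min (by linarith) hxr.le) hfac
  have hhr : h ≤ α / (2 * (1 - α)) * xr := by
    rw [hhdef, abs_of_neg hxl]
    exact mul_le_mul (min_le_left _ _) (min_le_right _ _) (le_min (by linarith) hxr.le) hfac
  intro p r hr
  rw [hg, ← gFun] at hr
  refine ⟨fun hp0 hph => ?_, fun hph hp_nonpos => ?_⟩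
  · refine le_of_gFun_eq_zero hα hα1 hJ hderiv hΦmono hΦ0 (hpos 0).le (fun x _ => hmax x)
      hxl.le (fun x hx => ?_) hp0 (hph.trans hhl) hr
    exact hxl_half ▸ (hincr hxl hx.2 hx.1).le
  · refine ge_of_gFun_eq_zero hα hα1 hJ hderiv hΦmono hΦ0 (hpos 0).le (fun x _ => hmax x)
      hxr.le (fun x hx => ?_) hp_nonpos (by linarith) hr
    exact hxr_half ▸ (hdecr hx.1 hxr hx.2).le

/-- Lemma estrh(b): with a = b/2 and h as defined from the solutions x_ℓ < 0 < x_r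
of 2αJΦ′(x) = a, if 0 ≤ p ≤ h and g_p(r) = 0 then r ≤ 2p/(αJ), and if
−h ≤ p ≤ 0 and g_p(r) = 0 then r ≥ 2p/(αJ). -/
theorem g_zero_upper_bound
    (α J lam : ℝ) (Φ Φ' : ℝ → ℝ)
    (hα : 0 < α) (hα1 : α < 1) (hJ : 0 < J) (hlam : 0 < lam)
    (hmono : Monotone Φ)
    (hbot : Filter.Tendsto Φ Filter.atBot (nhds 0))
    (htop : Filter.Tendsto Φ Filter.atTop (nhds 1))
    (hderiv : ∀ x, HasDerivAt Φ (Φ' x) x)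
    (hmax : ∀ x, Φ' x ≤ Φ' 0)
    (hincr : StrictMonoOn Φ' (Set.Iio (0 : ℝ)))
    (hdecr : StrictAntiOn Φ' (Set.Ioi (0 : ℝ)))
    (hΦ0 : Φ 0 = 1 / 2)
    (b a : ℝ) (hbdef : b = 2 * α * J * Φ' 0) (hb : b < 1) (hadef : a = b / 2)
    (xl xr : ℝ) (hxl : xl < 0) (hxr : 0 < xr)
    (hxla : 2 * α * J * Φ' xl = a) (hxra : 2 * α * J * Φ' xr = a)
    (h : ℝ) (hhdef : h = min (α / (2 * (1 - α))) 1 * min |xl| xr)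
    (g : ℝ → ℝ → ℝ)
    (hg : ∀ p d : ℝ, g p d = α * (1 - 2 * Φ (p - J * d)) + (1 - α) * (1 - 2 * Φ p)) :
    ∀ p r : ℝ, g p r = 0 →
      (0 ≤ p → p ≤ h → r ≤ 2 * p / (α * J)) ∧
      (-h ≤ p → p ≤ 0 → 2 * p / (α * J) ≤ r) :=
  g_zero_upper_bound_general α J Φ Φ' hα hα1 hJ hmono hderiv hmax hincr hdecr hΦ0 b a hbdef hadef xl
    xr hxl hxr hxla hxra h hhdef g hg
end

section
/- Assume 2αJΦ′(0) < 1, and let (p_n, d_n)_{n≥0} be any orbit of the dynamical system generated by Ψ with d₀ ∈ [−1,1]. Then either (p_n, d_n) → (0,0) as n → ∞, or there exists a finite r ≥ 0 such that either 0 ≤ p_{r+1} ≤ λ d_r or λ d_r ≤ p_{r+1} ≤ 0. -/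
/-!
If no crossing time exists, the positions `p_n` keep a strict sign, and the symmetry
`Φ ↦ 1 - Φ(-·)`, `(p, d) ↦ (-p, -d)` reduces to `p_n > 0`. As `Φ` is not constant and `Φ′ ≥ 0`
is maximal at `0`, `Φ′(0) > 0`, so the monotone `Φ` exceeds `1/2` on `(0, ∞)`. While `d_n > 0`
the position grows, and because `Φ` is `Φ′(0)`-Lipschitz with `2αJΦ′(0) < 1`, the velocity drops
by at least `2Φ(p_0) - 1 > 0` per step; so some `d_N ≤ 0`. From then on
`d_{n+1} ≤ 1 - 2Φ(p_{n+1}) < 0`, hence `p_n` decreases to some `L ≥ 0`, `d_n → 0`, and `(L, 0)`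
is a fixed point of `Ψ`, which forces `Φ(L) = 1/2`, i.e. `L = 0`.
-/

open Filter Topology Set

section DerivPos

variable {f : ℝ → ℝ} {f' a b : ℝ}

theorem Monotone.apply_lt_apply_of_hasDerivAt_pos_of_lt (hf : Monotone f)
    (hd : HasDerivAt f f' a) (hf' : 0 < f') (hab : a < b) : f a < f b := by
  have hslope : ∀ᶠ x in 𝓝[>] a, 0 < slope f a x :=
    (hd.tendsto_slope.mono_left (nhdsGT_le_nhdsNE a)).eventually (eventually_gt_nhds hf')
  obtain ⟨c, hc, hac, hcb⟩ := (hslope.and (Ioo_mem_nhdsGT hab)).exists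
  exact ((slope_pos_iff hac).1 hc).trans_le (hf hcb.le)

theorem Monotone.apply_lt_apply_of_hasDerivAt_pos_of_gt (hf : Monotone f)
    (hd : HasDerivAt f f' a) (hf' : 0 < f') (hba : b < a) : f b < f a := by
  have hslope : ∀ᶠ x in 𝓝[<] a, 0 < slope f a x :=
    (hd.tendsto_slope.mono_left (nhdsLT_le_nhdsNE a)).eventually (eventually_gt_nhds hf')
  obtain ⟨c, hc, hbc, hca⟩ := (hslope.and (Ioo_mem_nhdsLT hba)).exists
  exact (hf hbc.le).trans_lt ((slope_pos_iff_gt hca).1 hc)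

/-- If the maximum of the nonnegative derivative were `0`, then `f` would be constant. -/
theorem Monotone.hasDerivAt_pos_of_isMax {f' : ℝ → ℝ} (hf : Monotone f)
    (hd : ∀ x, HasDerivAt f (f' x) x) (hmax : ∀ x, f' x ≤ f' a) (hne : ∃ x, f x ≠ f a) :
    0 < f' a := by
  by_contra! hle
  have hzero : ∀ x, deriv f x = 0 := fun x =>
    le_antisymm ((hd x).deriv ▸ (hmax x).trans hle) hf.deriv_nonneg
  obtain ⟨x, hx⟩ := hne
  exact hx (is_const_of_deriv_eq_zero (fun y => (hd y).differentiableAt) hzero x a)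

end DerivPos

/-- The map `Ψ` of the dynamical system; `x = (p, d)`. -/
def stepMap (α J lam : ℝ) (Φ : ℝ → ℝ) (x : ℝ × ℝ) : ℝ × ℝ :=
  (x.1 + lam * x.2,
   α * (1 - 2 * Φ (x.1 + (lam - J) * x.2)) + (1 - α) * (1 - 2 * Φ (x.1 + lam * x.2)))

section StepMap

variable {α J lam K : ℝ} {Φ : ℝ → ℝ}

theorem stepMap_fst (x : ℝ × ℝ) : (stepMap α J lam Φ x).1 = x.1 + lam * x.2 := rfl

theorem stepMap_snd (x : ℝ × ℝ) : (stepMap α J lam Φ x).2 =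
    2 * α * (Φ (x.1 + lam * x.2) - Φ (x.1 + lam * x.2 - J * x.2))
      + (1 - 2 * Φ (x.1 + lam * x.2)) := by
  rw [stepMap, show x.1 + (lam - J) * x.2 = x.1 + lam * x.2 - J * x.2 by ring]
  ring

theorem continuous_stepMap (hΦ : Continuous Φ) : Continuous (stepMap α J lam Φ) := by
  unfold stepMap
  fun_prop

theorem stepMap_reflect_neg (x : ℝ × ℝ) :
    stepMap α J lam (fun y => 1 - Φ (-y)) (-x) = -stepMap α J lam Φ x := by
  refine Prod.ext ?_ ?_
  · simp only [stepMap_fst, Prod.fst_neg, Prod.snd_neg]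
    ring
  · simp only [stepMap, Prod.fst_neg, Prod.snd_neg]
    rw [show -(-x.1 + (lam - J) * -x.2) = x.1 + (lam - J) * x.2 by ring,
      show -(-x.1 + lam * -x.2) = x.1 + lam * x.2 by ring]
    ring

theorem stepMap_snd_le_of_nonpos (hα : 0 ≤ α) (hJ : 0 ≤ J) (hΦ : Monotone Φ) {x : ℝ × ℝ}
    (hx : x.2 ≤ 0) : (stepMap α J lam Φ x).2 ≤ 1 - 2 * Φ (stepMap α J lam Φ x).1 := by
  have hΦx : Φ (x.1 + lam * x.2) ≤ Φ (x.1 + lam * x.2 - J * x.2) :=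
    hΦ (by nlinarith)
  rw [stepMap_snd, stepMap_fst]
  nlinarith

theorem stepMap_snd_le_of_pos (hα : 0 ≤ α) (hJ : 0 ≤ J)
    (hlip : ∀ x y, x ≤ y → Φ y - Φ x ≤ K * (y - x)) (hK : 2 * α * J * K ≤ 1) {x : ℝ × ℝ}
    (hx : 0 < x.2) :
    (stepMap α J lam Φ x).2 ≤ x.2 + (1 - 2 * Φ (stepMap α J lam Φ x).1) := by
  have hΦx := hlip (x.1 + lam * x.2 - J * x.2) (x.1 + lam * x.2) (by nlinarith)
  rw [show x.1 + lam * x.2 - (x.1 + lam * x.2 - J * x.2) = J * x.2 by ring] at hΦx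
  rw [stepMap_snd, stepMap_fst]
  nlinarith

end StepMap

section Orbit

variable {α J lam K : ℝ} {Φ : ℝ → ℝ} {s : ℕ → ℝ × ℝ}

theorem exists_snd_nonpos_of_forall_fst_pos (hα : 0 ≤ α) (hJ : 0 ≤ J) (hlam : 0 ≤ lam)
    (hmono : Monotone Φ) (hhalf : ∀ x, 0 < x → 1 / 2 < Φ x)
    (hlip : ∀ x y, x ≤ y → Φ y - Φ x ≤ K * (y - x)) (hK : 2 * α * J * K ≤ 1)
    (horb : ∀ n, s (n + 1) = stepMap α J lam Φ (s n)) (hpos : ∀ n, 0 < (s n).1) :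
    ∃ N, (s N).2 ≤ 0 := by
  by_contra! hd
  have hp_mono : Monotone fun n => (s n).1 := monotone_nat_of_le_succ fun n => by
    rw [horb n, stepMap_fst]
    nlinarith [hd n]
  set c := 2 * Φ (s 0).1 - 1
  have hc : 0 < c := by linarith [hhalf _ (hpos 0)]
  have hstep : ∀ n, (s (n + 1)).2 ≤ (s n).2 - c := fun n => by
    have := stepMap_snd_le_of_pos (lam := lam) hα hJ hlip hK (hd n)
    rw [← horb n] at this
    linarith [hmono (hp_mono (Nat.zero_le (n + 1)))]
  have hlin : ∀ n : ℕ, (s n).2 ≤ (s 0).2 - n * c := fun n => by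
    induction n with
    | zero => simp
    | succ n ih => push_cast; linarith [hstep n]
  obtain ⟨n, hn⟩ := exists_nat_gt ((s 0).2 / c)
  rw [div_lt_iff₀ hc] at hn
  linarith [hlin n, hd n]

theorem snd_nonpos_of_le (hα : 0 ≤ α) (hJ : 0 ≤ J) (hmono : Monotone Φ)
    (hhalf : ∀ x, 0 < x → 1 / 2 < Φ x) (horb : ∀ n, s (n + 1) = stepMap α J lam Φ (s n))
    (hpos : ∀ n, 0 < (s n).1) {N : ℕ} (hN : (s N).2 ≤ 0) : ∀ n, N ≤ n → (s n).2 ≤ 0 := by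
  refine Nat.le_induction hN fun n _ hn => ?_
  have := stepMap_snd_le_of_nonpos (lam := lam) hα hJ hmono hn
  rw [← horb n] at this
  linarith [hhalf _ (hpos (n + 1))]

theorem tendsto_zero_of_forall_snd_nonpos (hlam : 0 < lam) (hcont : Continuous Φ)
    (hhalf : ∀ x, 0 < x → 1 / 2 < Φ x) (horb : ∀ n, s (n + 1) = stepMap α J lam Φ (s n))
    (hpos : ∀ n, 0 < (s n).1) (hneg : ∀ n, (s n).2 ≤ 0) : Tendsto s atTop (𝓝 0) := by
  have hp_anti : Antitone fun n => (s n).1 := antitone_nat_of_succ_le fun n => by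
    rw [horb n, stepMap_fst]
    linarith [mul_nonpos_of_nonneg_of_nonpos hlam.le (hneg n)]
  set L := ⨅ n, (s n).1
  have hp : Tendsto (fun n => (s n).1) atTop (𝓝 L) :=
    tendsto_atTop_ciInf hp_anti ⟨0, by rintro _ ⟨n, rfl⟩; exact (hpos n).le⟩
  have hd : Tendsto (fun n => (s n).2) atTop (𝓝 0) := by
    have := ((hp.comp (tendsto_add_atTop_nat 1)).sub hp).div_const lam
    rw [sub_self, zero_div] at this
    refine this.congr fun n => ?_
    simp only [Function.comp, horb n, stepMap_fst]
    field_simp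
    ring
  have hs : Tendsto s atTop (𝓝 (L, 0)) := hp.prodMk_nhds hd
  have hfix : stepMap α J lam Φ (L, 0) = (L, 0) := by
    refine tendsto_nhds_unique ?_ ((tendsto_add_atTop_iff_nat 1).2 hs)
    rw [show (fun n => s (n + 1)) = stepMap α J lam Φ ∘ s from funext horb]
    exact ((continuous_stepMap hcont).tendsto _).comp hs
  have hΦL : Φ L = 1 / 2 := by
    have := congrArg Prod.snd hfix
    simp only [stepMap, mul_zero, add_zero] at this
    linarith
  have hL : L = 0 :=
    le_antisymm (not_lt.1 fun hL => (hhalf L hL).ne' hΦL) (ge_of_tendsto' hp fun n => (hpos n).le)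
  rwa [hL] at hs

theorem tendsto_zero_of_forall_fst_pos (hα : 0 ≤ α) (hJ : 0 ≤ J) (hlam : 0 < lam)
    (hmono : Monotone Φ) (hcont : Continuous Φ) (hhalf : ∀ x, 0 < x → 1 / 2 < Φ x)
    (hlip : ∀ x y, x ≤ y → Φ y - Φ x ≤ K * (y - x)) (hK : 2 * α * J * K ≤ 1)
    (horb : ∀ n, s (n + 1) = stepMap α J lam Φ (s n)) (hpos : ∀ n, 0 < (s n).1) :
    Tendsto s atTop (𝓝 0) := by
  obtain ⟨N, hN⟩ :=
    exists_snd_nonpos_of_forall_fst_pos hα hJ hlam.le hmono hhalf hlip hK horb hpos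
  have hneg := snd_nonpos_of_le hα hJ hmono hhalf horb hpos hN
  refine (tendsto_add_atTop_iff_nat N).1 <|
    tendsto_zero_of_forall_snd_nonpos (α := α) (J := J) hlam hcont hhalf (fun n => ?_)
      (fun n => hpos _) (fun n => hneg _ (Nat.le_add_left N n))
  rw [Nat.add_right_comm]
  exact horb (n + N)

theorem tendsto_zero_of_forall_fst_neg (hα : 0 ≤ α) (hJ : 0 ≤ J) (hlam : 0 < lam)
    (hmono : Monotone Φ) (hcont : Continuous Φ) (hhalf : ∀ x, x < 0 → Φ x < 1 / 2)
    (hlip : ∀ x y, x ≤ y → Φ y - Φ x ≤ K * (y - x)) (hK : 2 * α * J * K ≤ 1)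
    (horb : ∀ n, s (n + 1) = stepMap α J lam Φ (s n)) (hneg : ∀ n, (s n).1 < 0) :
    Tendsto s atTop (𝓝 0) := by
  have hreflect := tendsto_zero_of_forall_fst_pos (Φ := fun y => 1 - Φ (-y)) (s := -s) hα hJ hlam
    (fun x y hxy => by linarith [hmono (neg_le_neg hxy)]) (by fun_prop)
    (fun x hx => by linarith [hhalf (-x) (neg_lt_zero.2 hx)])
    (fun x y hxy => by
      linarith [hlip (-y) (-x) (neg_le_neg hxy), show K * (-x - -y) = K * (y - x) by ring])
    hK (fun n => by simp only [Pi.neg_apply, horb n, stepMap_reflect_neg])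
    (fun n => neg_pos.2 (hneg n))
  simpa using hreflect.neg

end Orbit

theorem forall_pos_or_forall_neg_or_exists_sign_change (p : ℕ → ℝ) :
    (∀ n, 0 < p n) ∨ (∀ n, p n < 0) ∨
      ∃ r, (p r ≤ 0 ∧ 0 ≤ p (r + 1)) ∨ (0 ≤ p r ∧ p (r + 1) ≤ 0) := by
  by_contra! h
  obtain ⟨⟨a, ha⟩, ⟨b, hb⟩, hstep⟩ := h
  rcases lt_trichotomy (p 0) 0 with h0 | h0 | h0
  · have hneg : ∀ n, p n < 0 := fun n => by
      induction n with
      | zero => exact h0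
      | succ n ih => exact (hstep n).1 ih.le
    exact (hneg b).not_ge hb
  · linarith [(hstep 0).1 h0.le, (hstep 0).2 h0.ge]
  · have hpos : ∀ n, 0 < p n := fun n => by
      induction n with
      | zero => exact h0
      | succ n ih => exact (hstep n).2 ih.le
    exact (hpos a).not_ge ha

theorem orbit_dichotomy_general
    (α J lam : ℝ) (Φ Φ' : ℝ → ℝ)
    (hα : 0 < α) (hJ : 0 < J) (hlam : 0 < lam)
    (hmono : Monotone Φ)
    (htop : Filter.Tendsto Φ Filter.atTop (nhds 1))
    (hderiv : ∀ x, HasDerivAt Φ (Φ' x) x)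
    (hmax : ∀ x, Φ' x ≤ Φ' 0)
    (hΦ0 : Φ 0 = 1 / 2)
    (hb : 2 * α * J * Φ' 0 < 1)
    (Ψ : ℝ × ℝ → ℝ × ℝ)
    (hΨ : ∀ x : ℝ × ℝ, Ψ x =
      (x.1 + lam * x.2,
       α * (1 - 2 * Φ (x.1 + (lam - J) * x.2))
         + (1 - α) * (1 - 2 * Φ (x.1 + lam * x.2))))
    (s : ℕ → ℝ × ℝ)
    (horb : ∀ n : ℕ, s (n + 1) = Ψ (s n)) :
    Filter.Tendsto s Filter.atTop (nhds ((0 : ℝ), (0 : ℝ))) ∨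
    ∃ r : ℕ,
      (0 ≤ (s (r + 1)).1 ∧ (s (r + 1)).1 ≤ lam * (s r).2) ∨
      (lam * (s r).2 ≤ (s (r + 1)).1 ∧ (s (r + 1)).1 ≤ 0) := by
  obtain rfl : Ψ = stepMap α J lam Φ := funext hΨ
  have hcont : Continuous Φ := continuous_iff_continuousAt.2 fun x => (hderiv x).continuousAt
  have hlip : ∀ x y, x ≤ y → Φ y - Φ x ≤ Φ' 0 * (y - x) :=
    image_sub_le_mul_sub_of_deriv_le (fun z => (hderiv z).differentiableAt)
      (fun z => (hderiv z).deriv ▸ hmax z)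
  obtain ⟨x₁, hx₁⟩ := (htop.eventually (lt_mem_nhds one_half_lt_one)).exists
  have hΦ'0 : 0 < Φ' 0 := hmono.hasDerivAt_pos_of_isMax hderiv hmax ⟨x₁, hΦ0 ▸ hx₁.ne'⟩
  rcases forall_pos_or_forall_neg_or_exists_sign_change (fun n => (s n).1) with
    hpos | hneg | ⟨r, hr⟩
  · refine .inl (tendsto_zero_of_forall_fst_pos hα.le hJ.le hlam hmono hcont (fun x hx => ?_)
      hlip hb.le horb hpos)
    exact hΦ0 ▸ hmono.apply_lt_apply_of_hasDerivAt_pos_of_lt (hderiv 0) hΦ'0 hx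
  · refine .inl (tendsto_zero_of_forall_fst_neg hα.le hJ.le hlam hmono hcont (fun x hx => ?_)
      hlip hb.le horb hneg)
    exact hΦ0 ▸ hmono.apply_lt_apply_of_hasDerivAt_pos_of_gt (hderiv 0) hΦ'0 hx
  · refine .inr ⟨r, ?_⟩
    rw [horb r, stepMap_fst] at hr ⊢
    rcases hr with h | h
    · exact .inl ⟨h.2, by linarith⟩
    · exact .inr ⟨by linarith, h.2⟩

/-- Lemma sitin: assuming 2αJΦ′(0) < 1, every orbit of the dynamical system
generated by Ψ with d₀ ∈ [−1,1] either converges to (0,0) or reaches a time r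
with 0 ≤ p_{r+1} ≤ λd_r or λd_r ≤ p_{r+1} ≤ 0. -/
theorem orbit_dichotomy
    (α J lam : ℝ) (Φ Φ' : ℝ → ℝ)
    (hα : 0 < α) (hα1 : α < 1) (hJ : 0 < J) (hlam : 0 < lam)
    (hmono : Monotone Φ)
    (hbot : Filter.Tendsto Φ Filter.atBot (nhds 0))
    (htop : Filter.Tendsto Φ Filter.atTop (nhds 1))
    (hderiv : ∀ x, HasDerivAt Φ (Φ' x) x)
    (hmax : ∀ x, Φ' x ≤ Φ' 0)
    (hincr : StrictMonoOn Φ' (Set.Iio (0 : ℝ)))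
    (hdecr : StrictAntiOn Φ' (Set.Ioi (0 : ℝ)))
    (hΦ0 : Φ 0 = 1 / 2)
    (hb : 2 * α * J * Φ' 0 < 1)
    (Ψ : ℝ × ℝ → ℝ × ℝ)
    (hΨ : ∀ x : ℝ × ℝ, Ψ x =
      (x.1 + lam * x.2,
       α * (1 - 2 * Φ (x.1 + (lam - J) * x.2))
         + (1 - α) * (1 - 2 * Φ (x.1 + lam * x.2))))
    (s : ℕ → ℝ × ℝ)
    (horb : ∀ n : ℕ, s (n + 1) = Ψ (s n))
    (hd0 : (s 0).2 ∈ Set.Icc (-1 : ℝ) 1) :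
    Filter.Tendsto s Filter.atTop (nhds ((0 : ℝ), (0 : ℝ))) ∨
    ∃ r : ℕ,
      (0 ≤ (s (r + 1)).1 ∧ (s (r + 1)).1 ≤ lam * (s r).2) ∨
      (lam * (s r).2 ≤ (s (r + 1)).1 ∧ (s (r + 1)).1 ≤ 0) :=
  orbit_dichotomy_general α J lam Φ Φ' hα hJ hlam hmono htop hderiv hmax hΦ0 hb Ψ hΨ s horb
end

section
/- Assume b := 2αJΦ′(0) < 1, set a := b/2, let x_ℓ < 0 < x_r be the negative and positive solutions of 2αJΦ′(x) = a, set h := min(α/(2(1−α)), 1)·min(|x_ℓ|, x_r), let k be the minimal positive integer with b^k ≤ Jα(1−b)/(2b), and let λ_c := min( Jα(1−b)/(2bk), αJ/2, h ). Suppose λ ∈ (0, λ_c], and let (p_n, d_n)_{n≥0} be an orbit of the dynamical system generated by Ψ with d₀ ∈ [−1,1]. If 0 ≤ p₁ ≤ λ d₀, then either (p_n, d_n) → (0,0) as n → ∞, or there exists a finite ℓ ≥ 1 such that: (i) g_{p_j}(d_{j−1}) ≥ 0 for all j = 1,…,ℓ; (ii) 0 ≤ d_j ≤ b·d_{j−1}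 for all j = 1,…,ℓ; (iii) p_{j+1} ≥ p_j for all j = 1,…,ℓ; and (iv) g_{p_{ℓ+1}}(d_ℓ) ≤ 0. Symmetrically, if λ d₀ ≤ p₁ ≤ 0, then either (p_n, d_n) → (0,0), or there exists a finite ℓ ≥ 1 such that g_{p_j}(d_{j−1}) ≤ 0 and b·d_{j−1} ≤ d_j ≤ 0 and p_{j+1} ≤ p_j for all j = 1,…,ℓ, and g_{p_{ℓ+1}}(d_ℓ) ≥ 0. -/
/-!
For `p, d ≥ 0` the bound `Φ 0 - Φ (-J d) ≤ Φ' 0 J d` gives `g_p(d) ≤ b d`, so as long as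
`d` stays nonnegative it decays geometrically while `p` is nondecreasing. The smallness of `λ`
makes `d₁ ≥ 0`: on `[xl, 0]` the slope of `Φ` is at least `Φ' 0 / 2`, which beats the growth
of `Φ p ≤ Φ (λ d₀)`. If `d` never turns negative, `d_n → 0`, and a positive `p_n` would force
`g_p(d) < 0` as soon as `J d ≤ p`; hence `p_n = 0` for `n ≥ 1` and the orbit converges.
Otherwise the first negative `d_{ℓ+1}` closes the block. The case `p₁ ≤ 0` is the mirror image
under `Φ x ↦ 1 - Φ (-x)`, `(p, d) ↦ (-p, -d)`.
-/

open Filter Set Topology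

structure IsUnimodalSigmoid (Φ Φ' : ℝ → ℝ) : Prop where
  monotone : Monotone Φ
  hasDerivAt : ∀ x, HasDerivAt Φ (Φ' x) x
  deriv_le : ∀ x, Φ' x ≤ Φ' 0
  strictMonoOn_Iio : StrictMonoOn Φ' (Iio 0)
  strictAntiOn_Ioi : StrictAntiOn Φ' (Ioi 0)
  map_zero : Φ 0 = 1 / 2

namespace IsUnimodalSigmoid

variable {Φ Φ' : ℝ → ℝ} (hΦ : IsUnimodalSigmoid Φ Φ')
include hΦ

theorem reflect : IsUnimodalSigmoid (fun x => 1 - Φ (-x)) (fun x => Φ' (-x)) where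
  monotone _ _ hxy := sub_le_sub_left (hΦ.monotone (neg_le_neg hxy)) 1
  hasDerivAt x := by
    simpa using ((hΦ.hasDerivAt (-x)).comp x (hasDerivAt_neg x)).const_sub 1
  deriv_le x := by simpa using hΦ.deriv_le (-x)
  strictMonoOn_Iio _ hx _ hy hxy :=
    hΦ.strictAntiOn_Ioi (mem_Ioi.2 (neg_pos.2 hy)) (mem_Ioi.2 (neg_pos.2 hx)) (neg_lt_neg hxy)
  strictAntiOn_Ioi _ hx _ hy hxy :=
    hΦ.strictMonoOn_Iio (mem_Iio.2 (neg_lt_zero.2 hy)) (mem_Iio.2 (neg_lt_zero.2 hx))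
      (neg_lt_neg hxy)
  map_zero := by norm_num [hΦ.map_zero]

theorem deriv_nonneg (x : ℝ) : 0 ≤ Φ' x :=
  (hΦ.hasDerivAt x).deriv ▸ hΦ.monotone.deriv_nonneg

theorem deriv_pos (x : ℝ) : 0 < Φ' x := by
  have pos_of_pos : ∀ y, 0 < y → 0 < Φ' y := fun y hy =>
    (hΦ.deriv_nonneg _).trans_lt <|
      hΦ.strictAntiOn_Ioi hy (show 0 < y + 1 by linarith) (lt_add_one y)
  rcases lt_trichotomy x 0 with hx | rfl | hx
  · exact (hΦ.deriv_nonneg _).trans_lt <|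
      hΦ.strictMonoOn_Iio (show x - 1 < 0 by linarith) hx (sub_one_lt x)
  · exact (pos_of_pos 1 one_pos).trans_le (hΦ.deriv_le 1)
  · exact pos_of_pos x hx

theorem strictMono : StrictMono Φ :=
  strictMono_of_deriv_pos fun x => (hΦ.hasDerivAt x).deriv ▸ hΦ.deriv_pos x

theorem half_lt {x : ℝ} (hx : 0 < x) : 1 / 2 < Φ x :=
  hΦ.map_zero ▸ hΦ.strictMono hx

theorem sub_le_mul_sub {x y : ℝ} (hxy : x ≤ y) : Φ y - Φ x ≤ Φ' 0 * (y - x) :=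
  image_sub_le_mul_sub_of_deriv_le (fun z => (hΦ.hasDerivAt z).differentiableAt)
    (fun z => (hΦ.hasDerivAt z).deriv ▸ hΦ.deriv_le z) hxy

theorem mul_sub_le_sub {c x y : ℝ} (hcx : c ≤ x) (hxy : x ≤ y) (hy : y ≤ 0) :
    Φ' c * (y - x) ≤ Φ y - Φ x := by
  refine (convex_Icc c 0).mul_sub_le_image_sub_of_le_deriv
    (fun z _ => (hΦ.hasDerivAt z).continuousAt.continuousWithinAt)
    (fun z _ => (hΦ.hasDerivAt z).differentiableAt.differentiableWithinAt) ?_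
    x ⟨hcx, hxy.trans hy⟩ y ⟨hcx.trans hxy, hy⟩ hxy
  rw [interior_Icc]
  intro z hz
  rw [(hΦ.hasDerivAt z).deriv]
  exact (hΦ.strictMonoOn_Iio (hz.1.trans hz.2) hz.2 hz.1).le

end IsUnimodalSigmoid

/-- `gMap α J Φ p d` is the paper's `g_p(d)`. -/
def gMap (α J : ℝ) (Φ : ℝ → ℝ) (p d : ℝ) : ℝ :=
  α * (1 - 2 * Φ (p - J * d)) + (1 - α) * (1 - 2 * Φ p)

section gMap

variable {α J b : ℝ} {Φ Φ' : ℝ → ℝ}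

theorem gMap_reflect : gMap α J (fun x => 1 - Φ (-x)) = fun p d => -gMap α J Φ (-p) (-d) := by
  funext p d
  simp only [gMap, neg_sub', sub_neg_eq_add, mul_neg]
  ring_nf

variable (hΦ : IsUnimodalSigmoid Φ Φ')
include hΦ

theorem gMap_le_mul (hα : 0 ≤ α) (hα1 : α ≤ 1) (hJ : 0 ≤ J) (hb : 2 * α * J * Φ' 0 ≤ b)
    {p d : ℝ} (hp : 0 ≤ p) (hd : 0 ≤ d) : gMap α J Φ p d ≤ b * d := by
  have hΦp : 1 / 2 ≤ Φ p := hΦ.map_zero ▸ hΦ.monotone hp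
  have hΦpd : Φ (-(J * d)) ≤ Φ (p - J * d) := hΦ.monotone (by linarith)
  have hlip : 1 / 2 - Φ (-(J * d)) ≤ Φ' 0 * (J * d) := by
    simpa [hΦ.map_zero] using hΦ.sub_le_mul_sub (neg_nonpos.2 (mul_nonneg hJ hd))
  calc gMap α J Φ p d ≤ α * (1 - 2 * Φ (-(J * d))) := by
        unfold gMap
        nlinarith [mul_le_mul_of_nonneg_left hΦpd hα,
          mul_nonneg (sub_nonneg.2 hα1) (sub_nonneg.2 hΦp)]
    _ ≤ 2 * α * J * Φ' 0 * d := by nlinarith [mul_le_mul_of_nonneg_left hlip hα]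
    _ ≤ b * d := mul_le_mul_of_nonneg_right hb hd

theorem gMap_neg (hα : 0 ≤ α) (hα1 : α < 1) {p d : ℝ} (hp : 0 < p) (hd : J * d ≤ p) :
    gMap α J Φ p d < 0 := by
  have h1 : 1 / 2 ≤ Φ (p - J * d) := hΦ.map_zero ▸ hΦ.monotone (sub_nonneg.2 hd)
  have h2 : 1 / 2 < Φ p := hΦ.half_lt hp
  unfold gMap
  nlinarith [mul_le_mul_of_nonneg_left h1 hα, mul_lt_mul_of_pos_left h2 (sub_pos.2 hα1)]

theorem gMap_nonneg {lam xl : ℝ} (hα : 0 < α) (hα1 : α ≤ 1) (hJ : 0 ≤ J) (hlam : 0 ≤ lam)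
    (hlamJ : 2 * lam ≤ α * J) (hxl : Φ' 0 ≤ 2 * Φ' xl) (hlamxl : 2 * (1 - α) * lam ≤ α * -xl)
    {p d : ℝ} (hp : 0 ≤ p) (hpd : p ≤ lam * d) (hd0 : 0 ≤ d) (hd1 : d ≤ 1) :
    0 ≤ gMap α J Φ p d := by
  set w := min ((J - lam) * d) (-xl)
  have hJlam : lam ≤ J := by nlinarith [mul_le_mul_of_nonneg_right hα1 hJ]
  have hxl0 : 0 ≤ -xl := (mul_nonneg_iff_of_pos_left hα).1 (by nlinarith)
  have hw : 0 ≤ w := le_min (mul_nonneg (sub_nonneg.2 hJlam) hd0) hxl0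
  have hwd : w ≤ (J - lam) * d := min_le_left _ _
  have hwxl : w ≤ -xl := min_le_right _ _
  have hweight : 2 * (1 - α) * (lam * d) ≤ α * w := by
    rcases min_choice ((J - lam) * d) (-xl) with hmin | hmin <;> rw [show w = _ from hmin]
    · nlinarith
    · nlinarith [mul_le_mul_of_nonneg_left hd1 hlam]
  have hΦp : Φ p ≤ 1 / 2 + Φ' 0 * (lam * d) := by
    have := hΦ.sub_le_mul_sub (mul_nonneg hlam hd0)
    rw [hΦ.map_zero, sub_zero] at this
    linarith [hΦ.monotone hpd]
  have hΦpd : Φ (p - J * d) ≤ 1 / 2 - Φ' xl * w := by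
    have := hΦ.mul_sub_le_sub (show xl ≤ -w by linarith) (neg_nonpos.2 hw) le_rfl
    rw [hΦ.map_zero, sub_neg_eq_add, zero_add] at this
    linarith [hΦ.monotone (show p - J * d ≤ -w by linarith)]
  have hΦ'0 := hΦ.deriv_nonneg 0
  unfold gMap
  nlinarith [mul_le_mul_of_nonneg_left hΦpd hα.le, mul_le_mul_of_nonneg_left hΦp (sub_nonneg.2 hα1),
    mul_le_mul_of_nonneg_left hweight hΦ'0, mul_le_mul_of_nonneg_left hxl (mul_nonneg hα.le hw)]

end gMap

structure IsOrbit (lam : ℝ) (g : ℝ → ℝ → ℝ) (s : ℕ → ℝ × ℝ) : Prop where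
  fst_succ : ∀ n, (s (n + 1)).1 = (s n).1 + lam * (s n).2
  snd_succ : ∀ n, (s (n + 1)).2 = g (s (n + 1)).1 (s n).2

def IsDecayBlock (g : ℝ → ℝ → ℝ) (b : ℝ) (s : ℕ → ℝ × ℝ) (l : ℕ) : Prop :=
  1 ≤ l ∧
    (∀ j : ℕ, 1 ≤ j → j ≤ l → 0 ≤ g ((s j).1) ((s (j - 1)).2)) ∧
    (∀ j : ℕ, 1 ≤ j → j ≤ l → 0 ≤ (s j).2 ∧ (s j).2 ≤ b * (s (j - 1)).2) ∧
    (∀ j : ℕ, 1 ≤ j → j ≤ l → (s j).1 ≤ (s (j + 1)).1) ∧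
    g ((s (l + 1)).1) ((s l).2) ≤ 0

theorem IsDecayBlock.of_reflect {g : ℝ → ℝ → ℝ} {b : ℝ} {s : ℕ → ℝ × ℝ} {l : ℕ}
    (h : IsDecayBlock (fun p d => -g (-p) (-d)) b (-s) l) :
    1 ≤ l ∧
      (∀ j : ℕ, 1 ≤ j → j ≤ l → g ((s j).1) ((s (j - 1)).2) ≤ 0) ∧
      (∀ j : ℕ, 1 ≤ j → j ≤ l → b * (s (j - 1)).2 ≤ (s j).2 ∧ (s j).2 ≤ 0) ∧
      (∀ j : ℕ, 1 ≤ j → j ≤ l → (s (j + 1)).1 ≤ (s j).1) ∧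
      0 ≤ g ((s (l + 1)).1) ((s l).2) := by
  obtain ⟨hl, hg, hd, hp, hexit⟩ := h
  simp only [Pi.neg_apply, Prod.fst_neg, Prod.snd_neg, neg_neg] at hg hd hp hexit
  refine ⟨hl, fun j h1 h2 => ?_, fun j h1 h2 => ?_, fun j h1 h2 => ?_, by linarith⟩
  · linarith [hg j h1 h2]
  · obtain ⟨hd1, hd2⟩ := hd j h1 h2
    constructor <;> linarith
  · linarith [hp j h1 h2]

namespace IsOrbit

variable {lam b J : ℝ} {g : ℝ → ℝ → ℝ} {s : ℕ → ℝ × ℝ} (hs : IsOrbit lam g s)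
include hs

theorem reflect : IsOrbit lam (fun p d => -g (-p) (-d)) (-s) where
  fst_succ n := by simp only [Pi.neg_apply, Prod.fst_neg, Prod.snd_neg, hs.fst_succ n]; ring
  snd_succ n := by simp only [Pi.neg_apply, Prod.fst_neg, Prod.snd_neg, neg_neg, hs.snd_succ n]

theorem snd_eq {j : ℕ} (hj : 1 ≤ j) : (s j).2 = g (s j).1 (s (j - 1)).2 := by
  obtain ⟨i, rfl⟩ := Nat.exists_eq_add_of_le' hj
  exact hs.snd_succ i

theorem fst_le_fst (hlam : 0 ≤ lam) {m n : ℕ} (hmn : m ≤ n)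
    (hd : ∀ i, m ≤ i → i < n → 0 ≤ (s i).2) : (s m).1 ≤ (s n).1 := by
  induction n, hmn using Nat.le_induction with
  | base => exact le_rfl
  | succ n hmn ih =>
    rw [hs.fst_succ]
    nlinarith [ih fun i hi hin => hd i hi (by omega), hd n hmn (by omega)]

variable (hg_le : ∀ p d, 0 ≤ p → 0 ≤ d → g p d ≤ b * d)
include hg_le

theorem snd_le_pow_mul (hb : 0 ≤ b) (hp : ∀ n, 0 ≤ (s (n + 1)).1) (hd : ∀ n, 0 ≤ (s n).2)
    (n : ℕ) : (s n).2 ≤ b ^ n * (s 0).2 := by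
  induction n with
  | zero => simp
  | succ n ih =>
    calc (s (n + 1)).2 ≤ b * (s n).2 := hs.snd_succ n ▸ hg_le _ _ (hp n) (hd n)
      _ ≤ b * (b ^ n * (s 0).2) := mul_le_mul_of_nonneg_left ih hb
      _ = b ^ (n + 1) * (s 0).2 := by ring

theorem tendsto_zero_of_snd_nonneg (hg_neg : ∀ p d, 0 < p → J * d ≤ p → g p d < 0)
    (hlam : 0 ≤ lam) (hb0 : 0 ≤ b) (hb1 : b < 1) (hp1 : 0 ≤ (s 1).1)
    (hd : ∀ n, 0 ≤ (s n).2) : Tendsto s atTop (𝓝 (0, 0)) := by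
  have hp_mono : Monotone fun n => (s n).1 :=
    monotone_nat_of_le_succ fun n => hs.fst_le_fst hlam n.le_succ fun i _ _ => hd i
  have hp : ∀ n, 0 ≤ (s (n + 1)).1 := fun n => hp1.trans (hp_mono (by omega))
  have hd_lim : Tendsto (fun n => (s n).2) atTop (𝓝 0) := by
    refine squeeze_zero hd (hs.snd_le_pow_mul hg_le hb0 hp hd) ?_
    simpa using (tendsto_pow_atTop_nhds_zero_of_lt_one hb0 hb1).mul_const (s 0).2
  have hp_zero : ∀ n, (s (n + 1)).1 = 0 := by
    intro m
    by_contra hm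
    have hpos : 0 < (s (m + 1)).1 := (hp m).lt_of_ne' hm
    have hJd : ∀ᶠ n in atTop, J * (s n).2 < (s (m + 1)).1 :=
      (hd_lim.const_mul J).eventually (gt_mem_nhds (by simpa using hpos))
    obtain ⟨n, hJdn, hmn⟩ := (hJd.and (eventually_ge_atTop m)).exists
    have hpn : (s (m + 1)).1 ≤ (s (n + 1)).1 := hp_mono (by omega)
    have hneg := hg_neg (s (n + 1)).1 (s n).2 (hpos.trans_le hpn) (by linarith)
    linarith [hs.snd_succ n, hd (n + 1)]
  refine Tendsto.prodMk_nhds ((tendsto_add_atTop_iff_nat 1).1 ?_) hd_lim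
  simp [hp_zero]

theorem isDecayBlock (hlam : 0 ≤ lam) {l : ℕ} (hl : 1 ≤ l) (hp1 : 0 ≤ (s 1).1)
    (hd : ∀ i ≤ l, 0 ≤ (s i).2) (hexit : (s (l + 1)).2 < 0) : IsDecayBlock g b s l := by
  have hp : ∀ j, 1 ≤ j → j ≤ l → 0 ≤ (s j).1 := fun j h1 h2 =>
    hp1.trans (hs.fst_le_fst hlam h1 fun i _ hi => hd i (by omega))
  refine ⟨hl, fun j h1 h2 => hs.snd_eq h1 ▸ hd j h2, fun j h1 h2 => ⟨hd j h2, ?_⟩,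
    fun j _ h2 => hs.fst_le_fst hlam j.le_succ fun i hi _ => hd i (by omega),
    (hs.snd_succ l ▸ hexit).le⟩
  exact hs.snd_eq h1 ▸ hg_le _ _ (hp j h1 h2) (hd (j - 1) (by omega))

theorem tendsto_or_isDecayBlock (hg_neg : ∀ p d, 0 < p → J * d ≤ p → g p d < 0)
    (hlam : 0 ≤ lam) (hb0 : 0 ≤ b) (hb1 : b < 1) (hp1 : 0 ≤ (s 1).1)
    (hd0 : 0 ≤ (s 0).2) (hd1 : 0 ≤ (s 1).2) :
    Tendsto s atTop (𝓝 (0, 0)) ∨ ∃ l, IsDecayBlock g b s l := by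
  classical
  by_cases hd : ∀ n, 0 ≤ (s n).2
  · exact .inl (hs.tendsto_zero_of_snd_nonneg hg_le hg_neg hlam hb0 hb1 hp1 hd)
  have hexit : ∃ l, (s (l + 1)).2 < 0 := by
    obtain ⟨_ | l, hl⟩ := not_forall.1 hd
    · exact absurd hd0 hl
    · exact ⟨l, lt_of_not_ge hl⟩
  have hl : 1 ≤ Nat.find hexit := Nat.one_le_iff_ne_zero.2 fun h0 => by
    have := Nat.find_spec hexit
    rw [h0] at this
    linarith
  refine .inr ⟨_, hs.isDecayBlock hg_le hlam hl hp1 (fun i hi => ?_) (Nat.find_spec hexit)⟩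
  rcases i with _ | i
  · exact hd0
  · exact not_lt.1 (Nat.find_min hexit (by omega))

end IsOrbit

section gMapOrbit

variable {α J lam b : ℝ} {Φ Φ' : ℝ → ℝ} {s : ℕ → ℝ × ℝ}

theorem IsOrbit.tendsto_or_isDecayBlock_gMap (hs : IsOrbit lam (gMap α J Φ) s)
    (hΦ : IsUnimodalSigmoid Φ Φ') (hα : 0 < α) (hα1 : α < 1) (hJ : 0 ≤ J) (hlam : 0 < lam)
    (hb : 2 * α * J * Φ' 0 ≤ b) (hb1 : b < 1) (hlamJ : 2 * lam ≤ α * J) {xl : ℝ}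
    (hxl : Φ' 0 ≤ 2 * Φ' xl) (hlamxl : 2 * (1 - α) * lam ≤ α * -xl)
    (hd0 : (s 0).2 ≤ 1) (hp1 : 0 ≤ (s 1).1) (hp1d : (s 1).1 ≤ lam * (s 0).2) :
    Tendsto s atTop (𝓝 (0, 0)) ∨ ∃ l, IsDecayBlock (gMap α J Φ) b s l := by
  have hd0' : 0 ≤ (s 0).2 := (mul_nonneg_iff_of_pos_left hlam).1 (hp1.trans hp1d)
  have hd1 : 0 ≤ (s 1).2 := hs.snd_succ 0 ▸
    gMap_nonneg hΦ hα hα1.le hJ hlam.le hlamJ hxl hlamxl hp1 hp1d hd0' hd0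
  have hb0 : 0 ≤ b := (mul_nonneg (by positivity) (hΦ.deriv_nonneg 0)).trans hb
  exact hs.tendsto_or_isDecayBlock (fun _ _ => gMap_le_mul hΦ hα.le hα1.le hJ hb)
    (fun _ _ => gMap_neg hΦ hα.le hα1) hlam.le hb0 hb1 hp1 hd0' hd1

theorem IsOrbit.tendsto_or_isDecayBlock_gMap_of_nonpos (hs : IsOrbit lam (gMap α J Φ) s)
    (hΦ : IsUnimodalSigmoid Φ Φ') (hα : 0 < α) (hα1 : α < 1) (hJ : 0 ≤ J) (hlam : 0 < lam)
    (hb : 2 * α * J * Φ' 0 ≤ b) (hb1 : b < 1) (hlamJ : 2 * lam ≤ α * J) {xr : ℝ}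
    (hxr : Φ' 0 ≤ 2 * Φ' xr) (hlamxr : 2 * (1 - α) * lam ≤ α * xr)
    (hd0 : -1 ≤ (s 0).2) (hp1 : (s 1).1 ≤ 0) (hp1d : lam * (s 0).2 ≤ (s 1).1) :
    Tendsto s atTop (𝓝 (0, 0)) ∨
      ∃ l : ℕ, 1 ≤ l ∧
        (∀ j : ℕ, 1 ≤ j → j ≤ l → gMap α J Φ ((s j).1) ((s (j - 1)).2) ≤ 0) ∧
        (∀ j : ℕ, 1 ≤ j → j ≤ l → b * (s (j - 1)).2 ≤ (s j).2 ∧ (s j).2 ≤ 0) ∧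
        (∀ j : ℕ, 1 ≤ j → j ≤ l → (s (j + 1)).1 ≤ (s j).1) ∧
        0 ≤ gMap α J Φ ((s (l + 1)).1) ((s l).2) := by
  have hs' : IsOrbit lam (gMap α J fun x => 1 - Φ (-x)) (-s) := gMap_reflect ▸ hs.reflect
  rcases hs'.tendsto_or_isDecayBlock_gMap hΦ.reflect hα hα1 hJ hlam (by simpa using hb) hb1
    hlamJ (xl := -xr) (by simpa using hxr) (by simpa using hlamxr) (neg_le.2 hd0)
    (by simpa using hp1) (by simpa using hp1d) with h | ⟨l, hl⟩
  · exact .inl (by simpa using h.neg)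
  · rw [gMap_reflect] at hl
    exact .inr ⟨l, hl.of_reflect⟩

end gMapOrbit

theorem orbit_decay_blocks_general
    (α J lam : ℝ) (Φ Φ' : ℝ → ℝ)
    (hα : 0 < α) (hα1 : α < 1) (hJ : 0 < J) (hlam : 0 < lam)
    (hmono : Monotone Φ)
    (hderiv : ∀ x, HasDerivAt Φ (Φ' x) x)
    (hmax : ∀ x, Φ' x ≤ Φ' 0)
    (hincr : StrictMonoOn Φ' (Set.Iio (0 : ℝ)))
    (hdecr : StrictAntiOn Φ' (Set.Ioi (0 : ℝ)))
    (hΦ0 : Φ 0 = 1 / 2)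
    (b a : ℝ) (hbdef : b = 2 * α * J * Φ' 0) (hb : b < 1) (hadef : a = b / 2)
    (xl xr : ℝ) (hxl : xl < 0) (hxr : 0 < xr)
    (hxla : 2 * α * J * Φ' xl = a) (hxra : 2 * α * J * Φ' xr = a)
    (h : ℝ) (hhdef : h = min (α / (2 * (1 - α))) 1 * min |xl| xr)
    (k : ℕ)
    (lamc : ℝ) (hlamc : lamc = min (J * α * (1 - b) / (2 * b * k)) (min (α * J / 2) h))
    (hlamle : lam ≤ lamc)
    (g : ℝ → ℝ → ℝ)
    (hg : ∀ p d : ℝ, g p d = α * (1 - 2 * Φ (p - J * d)) + (1 - α) * (1 - 2 * Φ p))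
    (Ψ : ℝ × ℝ → ℝ × ℝ)
    (hΨ : ∀ x : ℝ × ℝ, Ψ x =
      (x.1 + lam * x.2,
       α * (1 - 2 * Φ (x.1 + (lam - J) * x.2))
         + (1 - α) * (1 - 2 * Φ (x.1 + lam * x.2))))
    (s : ℕ → ℝ × ℝ)
    (horb : ∀ n : ℕ, s (n + 1) = Ψ (s n))
    (hd0 : (s 0).2 ∈ Set.Icc (-1 : ℝ) 1) :
    ((0 ≤ (s 1).1 ∧ (s 1).1 ≤ lam * (s 0).2) →
      Filter.Tendsto s Filter.atTop (nhds ((0 : ℝ), (0 : ℝ))) ∨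
      ∃ l : ℕ, 1 ≤ l ∧
        (∀ j : ℕ, 1 ≤ j → j ≤ l → 0 ≤ g ((s j).1) ((s (j - 1)).2)) ∧
        (∀ j : ℕ, 1 ≤ j → j ≤ l → 0 ≤ (s j).2 ∧ (s j).2 ≤ b * (s (j - 1)).2) ∧
        (∀ j : ℕ, 1 ≤ j → j ≤ l → (s j).1 ≤ (s (j + 1)).1) ∧
        g ((s (l + 1)).1) ((s l).2) ≤ 0) ∧
    ((lam * (s 0).2 ≤ (s 1).1 ∧ (s 1).1 ≤ 0) →
      Filter.Tendsto s Filter.atTop (nhds ((0 : ℝ), (0 : ℝ))) ∨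
      ∃ l : ℕ, 1 ≤ l ∧
        (∀ j : ℕ, 1 ≤ j → j ≤ l → g ((s j).1) ((s (j - 1)).2) ≤ 0) ∧
        (∀ j : ℕ, 1 ≤ j → j ≤ l → b * (s (j - 1)).2 ≤ (s j).2 ∧ (s j).2 ≤ 0) ∧
        (∀ j : ℕ, 1 ≤ j → j ≤ l → (s (j + 1)).1 ≤ (s j).1) ∧
        0 ≤ g ((s (l + 1)).1) ((s l).2)) := by
  have hΦ : IsUnimodalSigmoid Φ Φ' := ⟨hmono, hderiv, hmax, hincr, hdecr, hΦ0⟩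
  obtain rfl : g = gMap α J Φ := funext₂ hg
  have hs : IsOrbit lam (gMap α J Φ) s := by
    refine ⟨fun n => by rw [horb, hΨ], fun n => ?_⟩
    rw [horb, hΨ, gMap]
    ring_nf
  rw [hlamc, le_min_iff, le_min_iff] at hlamle
  obtain ⟨-, hlamJ, hlamh⟩ := hlamle
  have hαJ : α * J ≠ 0 := (mul_pos hα hJ).ne'
  have hxl' : Φ' 0 ≤ 2 * Φ' xl := (mul_left_cancel₀ hαJ (by linarith)).ge
  have hxr' : Φ' 0 ≤ 2 * Φ' xr := (mul_left_cancel₀ hαJ (by linarith)).ge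
  have hlamx : 2 * (1 - α) * lam ≤ α * min |xl| xr := by
    have := hlamh.trans <| hhdef ▸
      mul_le_mul_of_nonneg_right (min_le_left _ 1) (le_min (abs_nonneg xl) hxr.le)
    rwa [div_mul_eq_mul_div, le_div_iff₀ (by linarith), mul_comm] at this
  refine ⟨fun ⟨hp1, hp1d⟩ => ?_, fun ⟨hp1d, hp1⟩ => ?_⟩
  · exact hs.tendsto_or_isDecayBlock_gMap hΦ hα hα1 hJ.le hlam hbdef.ge hb (by linarith) hxl'
      (hlamx.trans (mul_le_mul_of_nonneg_left ((min_le_left _ _).trans (abs_of_neg hxl).le) hα.le))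
      hd0.2 hp1 hp1d
  · exact hs.tendsto_or_isDecayBlock_gMap_of_nonpos hΦ hα hα1 hJ.le hlam hbdef.ge hb (by linarith)
      hxr' (hlamx.trans (mul_le_mul_of_nonneg_left (min_le_right _ _) hα.le)) hd0.1 hp1 hp1d

/-- Lemma sitin1: under the smallness condition λ ∈ (0, λ_c], an orbit starting
with 0 ≤ p₁ ≤ λd₀ (resp. λd₀ ≤ p₁ ≤ 0) either converges to (0,0) or there is a
finite ℓ ≥ 1 with (i) g_{p_j}(d_{j−1}) ≥ 0, (ii) 0 ≤ d_j ≤ b d_{j−1},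
(iii) p_{j+1} ≥ p_j for j = 1,…,ℓ, and (iv) g_{p_{ℓ+1}}(d_ℓ) ≤ 0
(resp. the symmetric statement). -/
theorem orbit_decay_blocks
    (α J lam : ℝ) (Φ Φ' : ℝ → ℝ)
    (hα : 0 < α) (hα1 : α < 1) (hJ : 0 < J) (hlam : 0 < lam)
    (hmono : Monotone Φ)
    (hbot : Filter.Tendsto Φ Filter.atBot (nhds 0))
    (htop : Filter.Tendsto Φ Filter.atTop (nhds 1))
    (hderiv : ∀ x, HasDerivAt Φ (Φ' x) x)
    (hmax : ∀ x, Φ' x ≤ Φ' 0)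
    (hincr : StrictMonoOn Φ' (Set.Iio (0 : ℝ)))
    (hdecr : StrictAntiOn Φ' (Set.Ioi (0 : ℝ)))
    (hΦ0 : Φ 0 = 1 / 2)
    (b a : ℝ) (hbdef : b = 2 * α * J * Φ' 0) (hb : b < 1) (hadef : a = b / 2)
    (xl xr : ℝ) (hxl : xl < 0) (hxr : 0 < xr)
    (hxla : 2 * α * J * Φ' xl = a) (hxra : 2 * α * J * Φ' xr = a)
    (h : ℝ) (hhdef : h = min (α / (2 * (1 - α))) 1 * min |xl| xr)
    (k : ℕ) (hk1 : 0 < k) (hk2 : b ^ k ≤ J * α * (1 - b) / (2 * b))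
    (hkmin : ∀ m : ℕ, 0 < m → b ^ m ≤ J * α * (1 - b) / (2 * b) → k ≤ m)
    (lamc : ℝ) (hlamc : lamc = min (J * α * (1 - b) / (2 * b * k)) (min (α * J / 2) h))
    (hlamle : lam ≤ lamc)
    (g : ℝ → ℝ → ℝ)
    (hg : ∀ p d : ℝ, g p d = α * (1 - 2 * Φ (p - J * d)) + (1 - α) * (1 - 2 * Φ p))
    (Ψ : ℝ × ℝ → ℝ × ℝ)
    (hΨ : ∀ x : ℝ × ℝ, Ψ x =
      (x.1 + lam * x.2,
       α * (1 - 2 * Φ (x.1 + (lam - J) * x.2))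
         + (1 - α) * (1 - 2 * Φ (x.1 + lam * x.2))))
    (s : ℕ → ℝ × ℝ)
    (horb : ∀ n : ℕ, s (n + 1) = Ψ (s n))
    (hd0 : (s 0).2 ∈ Set.Icc (-1 : ℝ) 1) :
    ((0 ≤ (s 1).1 ∧ (s 1).1 ≤ lam * (s 0).2) →
      Filter.Tendsto s Filter.atTop (nhds ((0 : ℝ), (0 : ℝ))) ∨
      ∃ l : ℕ, 1 ≤ l ∧
        (∀ j : ℕ, 1 ≤ j → j ≤ l → 0 ≤ g ((s j).1) ((s (j - 1)).2)) ∧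
        (∀ j : ℕ, 1 ≤ j → j ≤ l → 0 ≤ (s j).2 ∧ (s j).2 ≤ b * (s (j - 1)).2) ∧
        (∀ j : ℕ, 1 ≤ j → j ≤ l → (s j).1 ≤ (s (j + 1)).1) ∧
        g ((s (l + 1)).1) ((s l).2) ≤ 0) ∧
    ((lam * (s 0).2 ≤ (s 1).1 ∧ (s 1).1 ≤ 0) →
      Filter.Tendsto s Filter.atTop (nhds ((0 : ℝ), (0 : ℝ))) ∨
      ∃ l : ℕ, 1 ≤ l ∧
        (∀ j : ℕ, 1 ≤ j → j ≤ l → g ((s j).1) ((s (j - 1)).2) ≤ 0) ∧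
        (∀ j : ℕ, 1 ≤ j → j ≤ l → b * (s (j - 1)).2 ≤ (s j).2 ∧ (s j).2 ≤ 0) ∧
        (∀ j : ℕ, 1 ≤ j → j ≤ l → (s (j + 1)).1 ≤ (s j).1) ∧
        0 ≤ g ((s (l + 1)).1) ((s l).2)) :=
  orbit_decay_blocks_general α J lam Φ Φ' hα hα1 hJ hlam hmono hderiv hmax hincr hdecr hΦ0 b a hbdef
    hb hadef xl xr hxl hxr hxla hxra h hhdef k lamc hlamc hlamle g hg Ψ hΨ s horb hd0
end

section
/- Assume b := 2αJΦ′(0) < 1, set a := b/2, let x_ℓ < 0 < x_r be the negative and positive solutions of 2αJΦ′(x) = a, set h := min(α/(2(1−α)), 1)·min(|x_ℓ|, x_r), let k be the minimal positive integer with b^k ≤ Jα(1−b)/(2b), and let λ_c := min( Jα(1−b)/(2bk), αJ/2, h ). Suppose λ ∈ (0, λ_c], and let (p_n, d_n)_{n≥0} be an orbit of the dynamical system generated by Ψ. If d₀ ≥ 0 and g_{p₁}(d₀) ≤ 0, then either (p_n, d_n) → (0,0) as n → ∞, or there exists m ≥ 1 such that: (i) D(p₁) ≤ d_j ≤ 0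 for j = 1,…,m, where D(p₁) is the unique fixed point of g_{p₁}; (ii) 0 ≤ p_j ≤ p_{j−1} for j = 2,…,m; and (iii) λ d_m ≤ p_{m+1} ≤ 0. Symmetrically, if d₀ ≤ 0 and g_{p₁}(d₀) ≥ 0, then either (p_n, d_n) → (0,0), or there exists m ≥ 1 such that D(p₁) ≥ d_j ≥ 0 for j = 1,…,m, 0 ≥ p_j ≥ p_{j−1} for j = 2,…,m, and λ d_m ≥ p_{m+1} ≥ 0. -/
open Filter

lemma aux_branch (lam b : ℝ) (hlam : 0 < lam) (hb0 : 0 ≤ b) (hb : b < 1)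
    (Φ : ℝ → ℝ) (hΦc : Continuous Φ) (hΦsm : StrictMono Φ) (hΦ0 : Φ 0 = 1/2)
    (g : ℝ → ℝ → ℝ)
    (hg0 : ∀ p, g p 0 = 1 - 2 * Φ p)
    (hgmono : ∀ p, Monotone (g p))
    (hganti : ∀ q : ℝ, Antitone (fun p => g p q))
    (hglip : ∀ p x y : ℝ, x ≤ y → g p y - g p x ≤ b * (y - x))
    (hgcont : Continuous (fun x : ℝ × ℝ => g x.1 x.2))
    (p d : ℕ → ℝ)
    (hp : ∀ n, p (n+1) = p n + lam * d n)
    (hd : ∀ n, d (n+1) = g (p (n+1)) (d n))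
    (D1 : ℝ) (hD1 : g (p 1) D1 = D1)
    (h0 : 0 ≤ d 0) (h1 : g (p 1) (d 0) ≤ 0) :
    Filter.Tendsto (fun n => (p n, d n)) Filter.atTop (nhds ((0:ℝ),(0:ℝ))) ∨
    ∃ m, 1 ≤ m ∧ (∀ j, 1 ≤ j → j ≤ m → D1 ≤ d j ∧ d j ≤ 0) ∧
      (∀ j, 2 ≤ j → j ≤ m → 0 ≤ p j ∧ p j ≤ p (j-1)) ∧
      (lam * d m ≤ p (m+1) ∧ p (m+1) ≤ 0) := by
  classical
  have hd1 : d 1 = g (p 1) (d 0) := hd 0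
  have hd1le : d 1 ≤ 0 := by rw [hd1]; exact h1
  have hΦp1 : (1:ℝ)/2 ≤ Φ (p 1) := by
    have h2 : g (p 1) 0 ≤ g (p 1) (d 0) := hgmono _ h0
    rw [hg0] at h2; linarith
  have hp1 : 0 ≤ p 1 := by
    by_contra hc; push_neg at hc
    have := hΦsm hc
    rw [hΦ0] at this; linarith
  have hD1le : D1 ≤ 0 := by
    by_contra hc; push_neg at hc
    have hdlt : d 0 < D1 := by
      by_contra hdc; push_neg at hdc
      have h3 := hgmono (p 1) hdc
      rw [hD1] at h3; linarith
    have h4 := hglip (p 1) (d 0) D1 hdlt.le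
    rw [hD1] at h4
    nlinarith
  have hD1d1 : D1 ≤ d 1 := by
    rw [hd1, ← hD1]; exact hgmono _ (le_trans hD1le h0)
  have inv : ∀ n, 1 ≤ n → (∀ j, 1 ≤ j → j ≤ n → 0 ≤ p j) →
      D1 ≤ d n ∧ d n ≤ 0 ∧ p n ≤ p 1 := by
    intro n
    induction n with
    | zero => omega
    | succ n ih =>
      intro _ hpos
      by_cases hn : n = 0
      · subst hn; exact ⟨hD1d1, hd1le, le_refl _⟩
      · have hn1 : 1 ≤ n := Nat.one_le_iff_ne_zero.mpr hn
        obtain ⟨ih1, ih2, ih3⟩ := ih hn1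
          (fun j hj1 hj2 => hpos j hj1 (le_trans hj2 (Nat.le_succ n)))
        have hpn1le : p (n+1) ≤ p n := by rw [hp n]; nlinarith
        have hpn1p1 : p (n+1) ≤ p 1 := le_trans hpn1le ih3
        have hpn1pos : 0 ≤ p (n+1) := hpos (n+1) (by omega) (le_refl _)
        have hdn1 : d (n+1) = g (p (n+1)) (d n) := hd n
        refine ⟨?_, ?_, hpn1p1⟩
        · rw [hdn1, ← hD1]
          calc g (p 1) D1 ≤ g (p 1) (d n) := hgmono _ ih1
            _ ≤ g (p (n+1)) (d n) := hganti (d n) hpn1p1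
        · rw [hdn1]
          have h5 : g (p (n+1)) (d n) ≤ g (p (n+1)) 0 := hgmono _ ih2
          have h6 : g (p (n+1)) 0 ≤ 0 := by
            rw [hg0]
            have : Φ 0 ≤ Φ (p (n+1)) := hΦsm.monotone hpn1pos
            rw [hΦ0] at this; linarith
          linarith
  by_cases hex : ∃ m, 1 ≤ m ∧ p (m+1) ≤ 0
  · right
    set m := Nat.find hex with hmdef
    obtain ⟨hm1, hm2⟩ : 1 ≤ m ∧ p (m+1) ≤ 0 := Nat.find_spec hex
    have hppos : ∀ j, 1 ≤ j → j ≤ m → 0 ≤ p j := by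
      intro j hj1 hj2
      rcases eq_or_lt_of_le hj1 with hj | hj
      · rw [← hj]; exact hp1
      · have hmin := Nat.find_min hex (show j - 1 < m by omega)
        push_neg at hmin
        have hje : j - 1 + 1 = j := by omega
        have := hmin (by omega)
        rw [hje] at this
        exact this.le
    refine ⟨m, hm1, ?_, ?_, ?_⟩
    · intro j hj1 hj2
      obtain ⟨a1, a2, _⟩ := inv j hj1
        (fun i hi1 hi2 => hppos i hi1 (le_trans hi2 hj2))
      exact ⟨a1, a2⟩
    · intro j hj2 hjm
      refine ⟨hppos j (by omega) hjm, ?_⟩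
      have hje : j - 1 + 1 = j := by omega
      obtain ⟨_, hdle, _⟩ := inv (j-1) (by omega)
        (fun i hi1 hi2 => hppos i hi1 (by omega))
      have hpe := hp (j-1)
      rw [hje] at hpe
      nlinarith
    · constructor
      · have hpm : 0 ≤ p m := hppos m hm1 le_rfl
        rw [hp m]; linarith
      · exact hm2
  · left
    push_neg at hex
    have hallpos : ∀ j, 1 ≤ j → 0 ≤ p j := by
      intro j hj
      rcases Nat.lt_or_ge j 2 with hj2 | hj2
      · have : j = 1 := by omega
        rw [this]; exact hp1
      · have h7 := hex (j - 1) (by omega)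
        have hje : j - 1 + 1 = j := by omega
        rw [hje] at h7
        exact h7.le
    have hinv : ∀ n, 1 ≤ n → D1 ≤ d n ∧ d n ≤ 0 ∧ p n ≤ p 1 :=
      fun n hn => inv n hn (fun j hj1 _ => hallpos j hj1)
    have hqanti : Antitone (fun n => p (n+1)) := by
      apply antitone_nat_of_succ_le
      intro n
      have hdle := (hinv (n+1) (by omega)).2.1
      have := hp (n+1)
      show p (n+1+1) ≤ p (n+1)
      nlinarith
    have hqbdd : BddBelow (Set.range (fun n => p (n+1))) := by
      refine ⟨0, ?_⟩
      rintro x ⟨n, rfl⟩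
      exact hallpos (n+1) (by omega)
    have hqlim : Tendsto (fun n => p (n+1)) atTop (nhds (⨅ n, p (n+1))) :=
      tendsto_atTop_ciInf hqanti hqbdd
    set L := ⨅ n, p (n+1) with hL
    have hq1 : Tendsto (fun n => p (n+1+1)) atTop (nhds L) :=
      (tendsto_add_atTop_iff_nat 1).2 hqlim
    have hdiff : Tendsto (fun n => p (n+1+1) - p (n+1)) atTop (nhds 0) := by
      simpa using hq1.sub hqlim
    have heq : ∀ n : ℕ, p (n+1+1) - p (n+1) = lam * d (n+1) := by
      intro n; rw [hp (n+1)]; ring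
    have hld : Tendsto (fun n => lam * d (n+1)) atTop (nhds 0) := by
      simpa [heq] using hdiff
    have hd1lim : Tendsto (fun n => d (n+1)) atTop (nhds 0) := by
      have h8 := hld.const_mul lam⁻¹
      simp only [inv_mul_cancel_left₀ hlam.ne', mul_zero] at h8
      exact h8
    have hdlim : Tendsto d atTop (nhds 0) := (tendsto_add_atTop_iff_nat 1).1 hd1lim
    have hpair : Tendsto (fun n => (p (n+1), d n)) atTop (nhds (L, 0)) :=
      hqlim.prodMk_nhds hdlim
    have hglim : Tendsto (fun n => g (p (n+1)) (d n)) atTop (nhds (g L 0)) :=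
      (hgcont.tendsto (L, 0)).comp hpair
    have hglim2 : Tendsto (fun n => d (n+1)) atTop (nhds (g L 0)) := by
      simpa [hd] using hglim
    have hgL : g L 0 = 0 := tendsto_nhds_unique hglim2 hd1lim
    rw [hg0] at hgL
    have hLz : L = 0 := by
      rcases lt_trichotomy L 0 with hc | hc | hc
      · have := hΦsm hc; rw [hΦ0] at this; linarith
      · exact hc
      · have := hΦsm hc; rw [hΦ0] at this; linarith
    rw [hLz] at hqlim
    have hplim : Tendsto p atTop (nhds 0) := (tendsto_add_atTop_iff_nat 1).1 hqlim
    exact hplim.prodMk_nhds hdlim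


set_option maxHeartbeats 1000000 in
/-- Lemma sitin2: under λ ∈ (0, λ_c], an orbit with d₀ ≥ 0 and g_{p₁}(d₀) ≤ 0
(i.e. 0 ≤ d₀ ≤ R(p₁)) either converges to (0,0) or there is m ≥ 1 with
(i) D(p₁) ≤ d_j ≤ 0 for j = 1,…,m, (ii) 0 ≤ p_j ≤ p_{j−1} for j = 2,…,m,
(iii) λd_m ≤ p_{m+1} ≤ 0; and symmetrically. Here D(p₁) is the unique fixed
point of g_{p₁}. -/
theorem orbit_return_blocks
    (α J lam : ℝ) (Φ Φ' : ℝ → ℝ)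
    (hα : 0 < α) (hα1 : α < 1) (hJ : 0 < J) (hlam : 0 < lam)
    (hmono : Monotone Φ)
    (hbot : Filter.Tendsto Φ Filter.atBot (nhds 0))
    (htop : Filter.Tendsto Φ Filter.atTop (nhds 1))
    (hderiv : ∀ x, HasDerivAt Φ (Φ' x) x)
    (hmax : ∀ x, Φ' x ≤ Φ' 0)
    (hincr : StrictMonoOn Φ' (Set.Iio (0 : ℝ)))
    (hdecr : StrictAntiOn Φ' (Set.Ioi (0 : ℝ)))
    (hΦ0 : Φ 0 = 1 / 2)
    (b a : ℝ) (hbdef : b = 2 * α * J * Φ' 0) (hb : b < 1) (hadef : a = b / 2)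
    (xl xr : ℝ) (hxl : xl < 0) (hxr : 0 < xr)
    (hxla : 2 * α * J * Φ' xl = a) (hxra : 2 * α * J * Φ' xr = a)
    (h : ℝ) (hhdef : h = min (α / (2 * (1 - α))) 1 * min |xl| xr)
    (k : ℕ) (hk1 : 0 < k) (hk2 : b ^ k ≤ J * α * (1 - b) / (2 * b))
    (hkmin : ∀ m : ℕ, 0 < m → b ^ m ≤ J * α * (1 - b) / (2 * b) → k ≤ m)
    (lamc : ℝ) (hlamc : lamc = min (J * α * (1 - b) / (2 * b * k)) (min (α * J / 2) h))
    (hlamle : lam ≤ lamc)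
    (g : ℝ → ℝ → ℝ)
    (hg : ∀ p d : ℝ, g p d = α * (1 - 2 * Φ (p - J * d)) + (1 - α) * (1 - 2 * Φ p))
    (Ψ : ℝ × ℝ → ℝ × ℝ)
    (hΨ : ∀ x : ℝ × ℝ, Ψ x =
      (x.1 + lam * x.2,
       α * (1 - 2 * Φ (x.1 + (lam - J) * x.2))
         + (1 - α) * (1 - 2 * Φ (x.1 + lam * x.2))))
    (s : ℕ → ℝ × ℝ)
    (horb : ∀ n : ℕ, s (n + 1) = Ψ (s n))
    (D1 : ℝ) (hD1 : g ((s 1).1) D1 = D1) :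
    ((0 ≤ (s 0).2 ∧ g ((s 1).1) ((s 0).2) ≤ 0) →
      Filter.Tendsto s Filter.atTop (nhds ((0 : ℝ), (0 : ℝ))) ∨
      ∃ m : ℕ, 1 ≤ m ∧
        (∀ j : ℕ, 1 ≤ j → j ≤ m → D1 ≤ (s j).2 ∧ (s j).2 ≤ 0) ∧
        (∀ j : ℕ, 2 ≤ j → j ≤ m → 0 ≤ (s j).1 ∧ (s j).1 ≤ (s (j - 1)).1) ∧
        (lam * (s m).2 ≤ (s (m + 1)).1 ∧ (s (m + 1)).1 ≤ 0)) ∧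
    (((s 0).2 ≤ 0 ∧ 0 ≤ g ((s 1).1) ((s 0).2)) →
      Filter.Tendsto s Filter.atTop (nhds ((0 : ℝ), (0 : ℝ))) ∨
      ∃ m : ℕ, 1 ≤ m ∧
        (∀ j : ℕ, 1 ≤ j → j ≤ m → 0 ≤ (s j).2 ∧ (s j).2 ≤ D1) ∧
        (∀ j : ℕ, 2 ≤ j → j ≤ m → (s (j - 1)).1 ≤ (s j).1 ∧ (s j).1 ≤ 0) ∧
        (0 ≤ (s (m + 1)).1 ∧ (s (m + 1)).1 ≤ lam * (s m).2)) := by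
  -- derivative facts
  have hderiveq : ∀ x, deriv Φ x = Φ' x := fun x => (hderiv x).deriv
  have hΦ'nonneg : ∀ x, 0 ≤ Φ' x := by
    intro x
    have hs := hasDerivAt_iff_tendsto_slope.1 (hderiv x)
    refine ge_of_tendsto' hs ?_
    intro y
    rcases lt_trichotomy x y with hxy | hxy | hxy
    · rw [slope_def_field]
      apply div_nonneg
      · have := hmono hxy.le; linarith
      · linarith
    · rw [← hxy]; simp [slope_def_field]
    · rw [slope_def_field]
      rw [div_nonneg_iff]
      right
      constructor
      · have := hmono hxy.le; linarith
      · linarith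
  have hΦ'negpos : ∀ x : ℝ, x < 0 → 0 < Φ' x := by
    intro x hx
    by_contra hc; push_neg at hc
    have h1 : Φ' (x - 1) < Φ' x :=
      hincr (by simp only [Set.mem_Iio]; linarith) (Set.mem_Iio.mpr hx) (by linarith)
    have := hΦ'nonneg (x - 1)
    linarith
  have hΦ'pospos : ∀ x : ℝ, 0 < x → 0 < Φ' x := by
    intro x hx
    by_contra hc; push_neg at hc
    have h1 : Φ' (x + 1) < Φ' x :=
      hdecr (Set.mem_Ioi.mpr hx) (by simp only [Set.mem_Ioi]; linarith) (by linarith)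
    have := hΦ'nonneg (x + 1)
    linarith
  have hΦ'0 : 0 < Φ' 0 := lt_of_lt_of_le (hΦ'negpos (-1) (by norm_num)) (hmax (-1))
  have hΦ'pos : ∀ x, 0 < Φ' x := by
    intro x
    rcases lt_trichotomy x 0 with hx | hx | hx
    · exact hΦ'negpos x hx
    · rwa [hx]
    · exact hΦ'pospos x hx
  have hΦsm : StrictMono Φ := by
    apply strictMono_of_deriv_pos
    intro x; rw [hderiveq]; exact hΦ'pos x
  have hΦc : Continuous Φ :=
    continuous_iff_continuousAt.2 fun x => (hderiv x).continuousAt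
  have hb0 : 0 ≤ b := by rw [hbdef]; positivity
  -- Lipschitz bound for Φ
  have key : ∀ x y : ℝ, x ≤ y → Φ y - Φ x ≤ Φ' 0 * (y - x) := by
    intro x y hxy
    have hG : ∀ t, HasDerivAt (fun u => Φ' 0 * u - Φ u) (Φ' 0 - Φ' t) t := by
      intro t
      have h1 : HasDerivAt (fun u : ℝ => Φ' 0 * u) (Φ' 0) t := by
        simpa using (hasDerivAt_id t).const_mul (Φ' 0)
      exact h1.sub (hderiv t)
    have hGdiff : Differentiable ℝ (fun u => Φ' 0 * u - Φ u) :=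
      fun t => (hG t).differentiableAt
    have hGmono : Monotone (fun u => Φ' 0 * u - Φ u) := by
      apply monotone_of_deriv_nonneg hGdiff
      intro t
      rw [(hG t).deriv]
      have := hmax t; linarith
    have := hGmono hxy
    simp only [] at this
    nlinarith
  -- g facts
  have hg0 : ∀ p, g p 0 = 1 - 2 * Φ p := by
    intro p; rw [hg, mul_zero, sub_zero]; ring
  have hgmono : ∀ p, Monotone (g p) := by
    intro p x y hxy
    rw [hg, hg]
    have h1 : Φ (p - J * y) ≤ Φ (p - J * x) := hΦsm.monotone (by nlinarith)
    nlinarith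
  have hganti : ∀ q : ℝ, Antitone (fun p => g p q) := by
    intro q x y hxy
    simp only [hg]
    have h1 : Φ (x - J * q) ≤ Φ (y - J * q) := hΦsm.monotone (by linarith)
    have h2 : Φ x ≤ Φ y := hΦsm.monotone hxy
    nlinarith
  have hglip : ∀ p x y : ℝ, x ≤ y → g p y - g p x ≤ b * (y - x) := by
    intro p x y hxy
    rw [hg, hg]
    have h1 := key (p - J * y) (p - J * x) (by nlinarith)
    rw [hbdef]
    nlinarith
  have hgcont : Continuous (fun x : ℝ × ℝ => g x.1 x.2) := by
    have heq : (fun x : ℝ × ℝ => g x.1 x.2) =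
        fun x : ℝ × ℝ => α * (1 - 2 * Φ (x.1 - J * x.2)) + (1 - α) * (1 - 2 * Φ x.1) :=
      funext fun x => hg x.1 x.2
    rw [heq]
    fun_prop
  -- orbit recurrences
  have hpn : ∀ n, (s (n+1)).1 = (s n).1 + lam * (s n).2 := by
    intro n; rw [horb n, hΨ]
  have hdn : ∀ n, (s (n+1)).2 = g ((s (n+1)).1) ((s n).2) := by
    intro n
    rw [hg, hpn n, horb n, hΨ]
    have harg : (s n).1 + lam * (s n).2 - J * (s n).2 = (s n).1 + (lam - J) * (s n).2 := by
      ring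
    rw [harg]
  have hseq : (fun n => ((s n).1, (s n).2)) = s := funext fun n => rfl
  constructor
  · rintro ⟨h0, h1⟩
    have := aux_branch lam b hlam hb0 hb Φ hΦc hΦsm hΦ0 g hg0 hgmono hganti hglip hgcont
      (fun n => (s n).1) (fun n => (s n).2) hpn hdn D1 hD1 h0 h1
    rcases this with hc | hc
    · left; rwa [hseq] at hc
    · right; exact hc
  · rintro ⟨h0, h1⟩
    -- apply aux to the reflected system
    have hΦsm' : StrictMono (fun x : ℝ => 1 - Φ (-x)) := by
      intro x y hxy
      have := hΦsm (show -y < -x by linarith)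
      simp only []
      linarith
    have hΦc' : Continuous (fun x : ℝ => 1 - Φ (-x)) := by fun_prop
    have hΦ0' : (fun x : ℝ => 1 - Φ (-x)) 0 = 1/2 := by
      simp [hΦ0]; norm_num
    have hg0' : ∀ p : ℝ, -g (-p) (-(0:ℝ)) = 1 - 2 * (1 - Φ (-p)) := by
      intro p; rw [neg_zero, hg0]; ring
    have e1 : ∀ n : ℕ, (fun n => -(s n).1) (n+1) = (fun n => -(s n).1) n + lam * (fun n => -(s n).2) n := by
      intro n; show -(s (n+1)).1 = -(s n).1 + lam * -(s n).2
      rw [hpn n]; ring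
    have e2 : ∀ n : ℕ, (fun n => -(s n).2) (n+1) =
        (fun p d => -g (-p) (-d)) ((fun n => -(s n).1) (n+1)) ((fun n => -(s n).2) n) := by
      intro n; show -(s (n+1)).2 = -g (-(-(s (n+1)).1)) (-(-(s n).2))
      rw [hdn n, neg_neg, neg_neg]
    have e3 : (fun p d => -g (-p) (-d)) ((fun n : ℕ => -(s n).1) 1) (-D1) = -D1 := by
      show -g (-(-(s 1).1)) (-(-D1)) = -D1
      rw [neg_neg, neg_neg, hD1]
    have e4 : (0:ℝ) ≤ (fun n : ℕ => -(s n).2) 0 := by show (0:ℝ) ≤ -(s 0).2; linarith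
    have e5 : (fun p d => -g (-p) (-d)) ((fun n : ℕ => -(s n).1) 1) ((fun n : ℕ => -(s n).2) 0) ≤ 0 := by
      show -g (-(-(s 1).1)) (-(-(s 0).2)) ≤ 0
      rw [neg_neg, neg_neg]; linarith
    have gm' : ∀ p : ℝ, Monotone ((fun p d => -g (-p) (-d)) p) := by
      intro p x y hxy
      show -g (-p) (-x) ≤ -g (-p) (-y)
      have := hgmono (-p) (show -y ≤ -x by linarith)
      linarith
    have ga' : ∀ q : ℝ, Antitone (fun p => (fun p d => -g (-p) (-d)) p q) := by
      intro q x y hxy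
      show -g (-y) (-q) ≤ -g (-x) (-q)
      have := hganti (-q) (show -y ≤ -x by linarith)
      simp only [] at this
      linarith
    have gl' : ∀ p x y : ℝ, x ≤ y →
        (fun p d => -g (-p) (-d)) p y - (fun p d => -g (-p) (-d)) p x ≤ b * (y - x) := by
      intro p x y hxy
      show -g (-p) (-y) - -g (-p) (-x) ≤ b * (y - x)
      have := hglip (-p) (-y) (-x) (by linarith)
      linarith
    have gc' : Continuous (fun x : ℝ × ℝ => (fun p d => -g (-p) (-d)) x.1 x.2) := by
      have h1c : Continuous (fun x : ℝ × ℝ => g (-x.1) (-x.2)) :=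
        hgcont.comp ((continuous_fst.neg).prodMk (continuous_snd.neg))
      exact h1c.neg
    have haux := aux_branch lam b hlam hb0 hb (fun x => 1 - Φ (-x)) hΦc' hΦsm' hΦ0'
      (fun p d => -g (-p) (-d))
      (fun p => hg0' p)
      gm' ga' gl' gc'
      (fun n => -(s n).1) (fun n => -(s n).2)
      e1 e2 (-D1) e3 e4 e5
    rcases haux with hc | hc
    · left
      have h1t : Filter.Tendsto (fun n => -(-(s n).1)) Filter.atTop (nhds (-(0:ℝ))) :=
        ((continuous_fst.tendsto _).comp hc).neg
      have h2t : Filter.Tendsto (fun n => -(-(s n).2)) Filter.atTop (nhds (-(0:ℝ))) :=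
        ((continuous_snd.tendsto _).comp hc).neg
      simp only [neg_neg, neg_zero] at h1t h2t
      have := h1t.prodMk_nhds h2t
      rwa [hseq] at this
    · right
      obtain ⟨m, hm, A, B, C⟩ := hc
      refine ⟨m, hm, ?_, ?_, ?_⟩
      · intro j hj1 hj2
        have h1' : -D1 ≤ -(s j).2 := (A j hj1 hj2).1
        have h2' : -(s j).2 ≤ 0 := (A j hj1 hj2).2
        exact ⟨by linarith, by linarith⟩
      · intro j hj1 hj2
        have h1' : (0:ℝ) ≤ -(s j).1 := (B j hj1 hj2).1
        have h2' : -(s j).1 ≤ -(s (j-1)).1 := (B j hj1 hj2).2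
        exact ⟨by linarith, by linarith⟩
      · have h1' : lam * -(s m).2 ≤ -(s (m+1)).1 := C.1
        have h2' : -(s (m+1)).1 ≤ 0 := C.2
        exact ⟨by linarith, by nlinarith⟩
end

section
/- Assume 2αJΦ′(0) < 1. Then there exists λ_c > 0 (depending only on α, J and Φ) such that for every λ ∈ (0, λ_c], the origin is a globally asymptotically stable equilibrium of the dynamical system generated by Ψ: for every initial condition (p₀, d₀) with p₀ ∈ ℝ and d₀ ∈ [−1,1], the orbit (p_n, d_n) converges to (0,0) as n → ∞. -/
/-!
In the variables `q = p + λ d` and `d` the map `Ψ` reads `d ↦ g(q, d)`, `q ↦ q + λ g(q, d)`,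
where `g(q, ·)` is a contraction with constant `κ = 2αJΦ'(0) < 1` and `g(·, d)` is
`2Φ'(0)`-Lipschitz. The fixed point `d*(q)` of `g(q, ·)` is Lipschitz in `q`, vanishes at `0` and
has the sign opposite to `q`, so for small `λ` the quantity `|q| + c |d - d*(q)|` decreases along
orbits by at least `λ/2 (|d*(q)| + |d - d*(q)|)`. Summing these decrements gives `d*(q_n) → 0`
and `d_n → 0`; then `1 - 2Φ(q_n) = g(q_n, 0) → 0`, which forces `q_n → 0` since `Φ` is strictly
increasing.
-/

open Filter Topology NNReal Function

theorem StrictMono.tendsto_of_tendsto_comp {α β ι : Type*} [LinearOrder α] [TopologicalSpace α]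
    [OrderTopology α] [LinearOrder β] [TopologicalSpace β] [OrderTopology β]
    {f : α → β} (hf : StrictMono f) {u : ι → α} {l : Filter ι} {a : α}
    (h : Tendsto (f ∘ u) l (𝓝 (f a))) : Tendsto u l (𝓝 a) :=
  tendsto_order.2
    ⟨fun _ ha => (h.eventually (lt_mem_nhds (hf ha))).mono fun _ hn => hf.lt_iff_lt.1 hn,
     fun _ ha => (h.eventually (gt_mem_nhds (hf ha))).mono fun _ hn => hf.lt_iff_lt.1 hn⟩

theorem pos_of_strictMonoOn_Iio_of_strictAntiOn_Ioi_s19 {f : ℝ → ℝ} (hf : ∀ x, 0 ≤ f x)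
    (hmax : ∀ x, f x ≤ f 0) (hincr : StrictMonoOn f (Set.Iio 0))
    (hdecr : StrictAntiOn f (Set.Ioi 0)) (x : ℝ) : 0 < f x := by
  rcases lt_trichotomy x 0 with hx | rfl | hx
  · exact (hf _).trans_lt (hincr (a := x - 1) (by simp; linarith) hx (by linarith))
  · have h : f (-2) < f (-1) := hincr (by norm_num) (by norm_num) (by norm_num)
    exact ((hf _).trans_lt h).trans_le (hmax _)
  · exact (hf _).trans_lt (hdecr (b := x + 1) hx (by simp; linarith) (by linarith))

theorem tendsto_zero_of_succ_add_mul_le {V a : ℕ → ℝ} {c : ℝ} (hc : 0 < c)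
    (hV : ∀ n, 0 ≤ V n) (ha : ∀ n, 0 ≤ a n) (h : ∀ n, V (n + 1) + c * a n ≤ V n) :
    Tendsto a atTop (𝓝 0) := by
  have hsum : ∀ n, V n + c * ∑ k ∈ Finset.range n, a k ≤ V 0 := by
    intro n
    induction n with
    | zero => simp
    | succ n ih => rw [Finset.sum_range_succ]; linarith [h n]
  refine (summable_of_sum_range_le (c := V 0 / c) ha fun n => ?_).tendsto_atTop_zero
  rw [le_div_iff₀' hc]
  linarith [hsum n, hV n]

theorem lipschitzWith_of_hasDerivAt_abs_le {f f' : ℝ → ℝ} {C : ℝ}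
    (hf : ∀ x, HasDerivAt f (f' x) x) (hC : ∀ x, |f' x| ≤ C) : LipschitzWith C.toNNReal f :=
  lipschitzWith_of_nnnorm_deriv_le (fun x => (hf x).differentiableAt) fun x => by
    rw [(hf x).deriv, ← NNReal.coe_le_coe, coe_nnnorm, Real.norm_eq_abs,
      Real.coe_toNNReal _ ((abs_nonneg _).trans (hC x))]
    exact hC x

section FixedPoint

variable {E : Type*} [SeminormedAddCommGroup E] {f : E → E} {κ : ℝ≥0} {x : E}

theorem LipschitzWith.norm_sub_apply_zero_le (hf : LipschitzWith κ f) (hx : IsFixedPt f x) :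
    ‖x - f 0‖ ≤ κ * ‖x‖ := by
  simpa [hx.eq, dist_eq_norm] using hf.dist_le_mul x 0

theorem LipschitzWith.norm_apply_zero_le (hf : LipschitzWith κ f) (hx : IsFixedPt f x) :
    ‖f 0‖ ≤ (1 + κ) * ‖x‖ := by
  have := hf.norm_sub_apply_zero_le hx
  have := norm_sub_norm_le (f 0) x
  rw [norm_sub_rev] at this
  linarith

end FixedPoint

/-- `x` and `f 0` lie on the same side of `0`, because `|x - f 0| ≤ κ |x| < |x|`. -/
theorem LipschitzWith.mul_isFixedPt_nonpos {f : ℝ → ℝ} {κ : ℝ≥0} {x q : ℝ} (hκ : κ < 1)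
    (hf : LipschitzWith κ f) (hx : IsFixedPt f x) (hq : q * f 0 ≤ 0) : q * x ≤ 0 := by
  have hfx := hf.norm_sub_apply_zero_le hx
  rw [Real.norm_eq_abs, Real.norm_eq_abs] at hfx
  have hκ' : (κ : ℝ) < 1 := hκ
  by_contra! hqx
  have h1 : |q| * |x - f 0| ≤ κ * (|q| * |x|) := by
    rw [mul_left_comm]; exact mul_le_mul_of_nonneg_left hfx (abs_nonneg q)
  rw [← abs_mul, ← abs_mul, abs_of_pos hqx] at h1
  have h2 := le_abs_self (q * (x - f 0))
  nlinarith

theorem lipschitzWith_of_forall_isFixedPt {P X : Type*} [PseudoMetricSpace P] [MetricSpace X]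
    {g : P → X → X} {x : P → X} {κ L : ℝ≥0} (hκ : κ < 1)
    (hgd : ∀ q, LipschitzWith κ (g q)) (hgq : ∀ d, LipschitzWith L fun q => g q d)
    (hx : ∀ q, IsFixedPt (g q) (x q)) : LipschitzWith (L / (1 - κ)) x := by
  refine LipschitzWith.of_dist_le_mul fun q r => ?_
  have := ContractingWith.dist_fixedPoint_fixedPoint_of_dist_le' ⟨hκ, hgd q⟩ (g r) (hx q)
    (hx r) fun z => (hgq z).dist_le_mul q r
  rwa [NNReal.coe_div, NNReal.coe_sub hκ.le, NNReal.coe_one, div_mul_eq_mul_div]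

theorem abs_add_eq_abs_sub_abs_of_mul_nonpos {a b : ℝ} (hab : a * b ≤ 0) (hba : |b| ≤ |a|) :
    |a + b| = |a| - |b| := by
  refine (sq_eq_sq₀ (abs_nonneg _) (sub_nonneg.2 hba)).1 ?_
  have hab' : |a| * |b| = -(a * b) := by rw [← abs_mul, abs_of_nonpos hab]
  rw [sq_abs, sub_sq, sq_abs, sq_abs, mul_assoc, hab']
  ring

theorem abs_add_mul_self_eq_of_lipschitzWith {x : ℝ → ℝ} {M : ℝ≥0} {q lam : ℝ}
    (hxM : LipschitzWith M x) (hx0 : x 0 = 0) (hsign : q * x q ≤ 0) (hlam : 0 ≤ lam)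
    (hlamM : lam * M ≤ 1) : |q + lam * x q| = |q| - lam * |x q| := by
  have hD : |x q| ≤ M * |q| := by simpa [Real.dist_eq, hx0] using hxM.dist_le_mul q 0
  rw [abs_add_eq_abs_sub_abs_of_mul_nonpos, abs_mul, abs_of_nonneg hlam]
  · nlinarith
  · rw [abs_mul, abs_of_nonneg hlam]
    nlinarith [mul_le_mul_of_nonneg_left hD hlam, abs_nonneg q]

section FeedbackOrbit

variable {g : ℝ → ℝ → ℝ} {x : ℝ → ℝ} {κ L : ℝ≥0} {lam : ℝ}

theorem feedback_lyapunov_step (hκ : κ < 1) (hL : 0 < L) (hgd : ∀ q, LipschitzWith κ (g q))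
    (hx : ∀ q, IsFixedPt (g q) (x q)) (hxL : LipschitzWith (L / (1 - κ)) x) (hx0 : x 0 = 0)
    {q d q' d' : ℝ} (hsign : q * x q ≤ 0) (hlam : 0 < lam) (hlamc : 6 * L * lam ≤ (1 - κ) ^ 2)
    (hd' : d' = g q d) (hq' : q' = q + lam * d') :
    |q'| + (1 - κ) / (2 * L) * |d' - x q'| + lam / 2 * (|x q| + |d - x q|)
      ≤ |q| + (1 - κ) / (2 * L) * |d - x q| := by
  have hκ' : (κ : ℝ) < 1 := hκ
  have hL' : (0 : ℝ) < L := hL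
  have h1κ : (0 : ℝ) < 1 - κ := by linarith
  set M : ℝ := L / (1 - κ) with hM
  have hxM : ∀ a b, |x a - x b| ≤ M * |a - b| := fun a b => by
    simpa [Real.dist_eq, NNReal.coe_sub hκ.le] using hxL.dist_le_mul a b
  have hlamM : lam * M ≤ 1 := by
    rw [hM, ← mul_div_assoc, div_le_one (by linarith)]
    nlinarith
  have hM0 : 0 ≤ M := div_nonneg hL'.le h1κ.le
  have hcontr : |d' - x q| ≤ κ * |d - x q| := by
    simpa [Real.dist_eq, hd', (hx q).eq] using (hgd q).dist_le_mul d (x q)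
  have hdrift : |q + lam * x q| = |q| - lam * |x q| :=
    abs_add_mul_self_eq_of_lipschitzWith hxL hx0 hsign hlam.le
      (by rwa [NNReal.coe_div, NNReal.coe_sub hκ.le, NNReal.coe_one])
  have hq_next : |q'| ≤ |q| - lam * |x q| + lam * (κ * |d - x q|) := by
    calc |q'| = |(q + lam * x q) + lam * (d' - x q)| := by rw [hq']; ring_nf
      _ ≤ |q + lam * x q| + lam * |d' - x q| := by
          grw [abs_add_le, abs_mul, abs_of_pos hlam]
      _ ≤ |q| - lam * |x q| + lam * (κ * |d - x q|) := by rw [hdrift]; gcongr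
  have hd_next : |d'| ≤ |x q| + κ * |d - x q| := by
    calc |d'| = |x q + (d' - x q)| := by ring_nf
      _ ≤ |x q| + κ * |d - x q| := by grw [abs_add_le, hcontr]
  have he_next : |d' - x q'| ≤ κ * |d - x q| + M * (lam * (|x q| + κ * |d - x q|)) := by
    have : |x q - x q'| ≤ M * (lam * (|x q| + κ * |d - x q|)) := by
      grw [hxM, hq', ← hd_next]
      rw [show q - (q + lam * d') = -(lam * d') by ring, abs_neg, abs_mul, abs_of_pos hlam]
    calc |d' - x q'| ≤ |d' - x q| + |x q - x q'| := abs_sub_le _ _ _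
      _ ≤ _ := by grw [hcontr, this]
  -- the weight `(1 - κ) / (2 L)` is `1 / (2 M)`: the drift of the fixed point along the step
  -- costs at most half of the decrease `λ |x q|` of `|q|`
  have hcM : (1 - κ) / (2 * L) * M = 1 / 2 := by
    rw [hM]; field_simp
  have hc0 : (0 : ℝ) ≤ (1 - κ) / (2 * L) := div_nonneg h1κ.le (by positivity)
  have hcoef : lam * (3 * κ + 1) / 2 ≤ (1 - κ) / (2 * L) * (1 - κ) := by
    rw [div_mul_eq_mul_div, div_le_div_iff₀ two_pos (by positivity)]
    nlinarith
  have he_scaled := mul_le_mul_of_nonneg_left he_next hc0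
  have hsplit : (1 - κ) / (2 * L) * (κ * |d - x q| + M * (lam * (|x q| + κ * |d - x q|)))
      = (1 - κ) / (2 * L) * κ * |d - x q| + lam / 2 * (|x q| + κ * |d - x q|) := by
    linear_combination (lam * (|x q| + κ * |d - x q|)) * hcM
  linarith [mul_le_mul_of_nonneg_right hcoef (abs_nonneg (d - x q))]

theorem tendsto_feedback_orbit (hκ : κ < 1) (hL : 0 < L) (hgd : ∀ q, LipschitzWith κ (g q))
    (hgq : ∀ d, LipschitzWith L fun q => g q d) (hg0 : g 0 0 = 0) (hsign : ∀ q, q * g q 0 ≤ 0)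
    (hlam : 0 < lam) (hlamc : 6 * L * lam ≤ (1 - κ) ^ 2) {q d : ℕ → ℝ}
    (hd : ∀ n, d (n + 1) = g (q n) (d n)) (hq : ∀ n, q (n + 1) = q n + lam * d (n + 1)) :
    Tendsto (fun n => g (q n) 0) atTop (𝓝 0) ∧ Tendsto d atTop (𝓝 0) := by
  set x : ℝ → ℝ := fun r => ContractingWith.fixedPoint (g r) ⟨hκ, hgd r⟩
  have hx : ∀ r, IsFixedPt (g r) (x r) := fun r => ContractingWith.fixedPoint_isFixedPt _
  have hx0 : x 0 = 0 := ContractingWith.fixedPoint_unique' ⟨hκ, hgd 0⟩ (hx 0) hg0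
  have hc : (0 : ℝ) ≤ (1 - κ) / (2 * L) :=
    div_nonneg (sub_nonneg.2 (NNReal.coe_le_one.2 hκ.le)) (by positivity)
  have ha : Tendsto (fun n => |x (q n)| + |d n - x (q n)|) atTop (𝓝 0) :=
    tendsto_zero_of_succ_add_mul_le
      (V := fun n => |q n| + (1 - κ) / (2 * L) * |d n - x (q n)|) (half_pos hlam)
      (fun n => add_nonneg (abs_nonneg _) (mul_nonneg hc (abs_nonneg _)))
      (fun n => by positivity) fun n =>
        feedback_lyapunov_step hκ hL hgd hx (lipschitzWith_of_forall_isFixedPt hκ hgd hgq hx) hx0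
          ((hgd _).mul_isFixedPt_nonpos hκ (hx _) (hsign _)) hlam hlamc (hd n) (hq n)
  constructor
  · refine squeeze_zero_norm (fun n => ?_) (by simpa using ha.const_mul (1 + κ : ℝ))
    grw [(hgd (q n)).norm_apply_zero_le (hx (q n)), Real.norm_eq_abs]
    gcongr
    exact le_add_of_nonneg_right (abs_nonneg _)
  · refine squeeze_zero_norm (fun n => ?_) ha
    calc ‖d n‖ = |x (q n) + (d n - x (q n))| := by rw [Real.norm_eq_abs]; ring_nf
      _ ≤ _ := abs_add_le _ _

end FeedbackOrbit

/-- The second component of `Ψ (p, d)`, written in terms of `q = p + λ d` and `d`. -/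
def psiSnd (α J : ℝ) (Φ : ℝ → ℝ) (q d : ℝ) : ℝ :=
  α * (1 - 2 * Φ (q - J * d)) + (1 - α) * (1 - 2 * Φ q)

section PsiSnd

variable {α J : ℝ} {Φ : ℝ → ℝ} {K : ℝ≥0}

theorem psiSnd_zero_right (q : ℝ) : psiSnd α J Φ q 0 = 1 - 2 * Φ q := by
  simp only [psiSnd, mul_zero, sub_zero]; ring

theorem mul_psiSnd_zero_right_nonpos (hΦ : Monotone Φ) (hΦ0 : Φ 0 = 1 / 2) (q : ℝ) :
    q * psiSnd α J Φ q 0 ≤ 0 := by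
  rw [psiSnd_zero_right]
  rcases le_total 0 q with hq | hq
  · nlinarith [hΦ hq]
  · nlinarith [hΦ hq]

theorem lipschitzWith_psiSnd_right (hα : 0 ≤ α) (hJ : 0 ≤ J) (hΦ : LipschitzWith K Φ) (q : ℝ) :
    LipschitzWith (2 * α * J * K).toNNReal (psiSnd α J Φ q) := by
  refine LipschitzWith.of_dist_le' fun d e => ?_
  have hΦde := hΦ.dist_le_mul (q - J * e) (q - J * d)
  rw [Real.dist_eq, Real.dist_eq, show q - J * e - (q - J * d) = J * (d - e) by ring, abs_mul,
    abs_of_nonneg hJ] at hΦde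
  calc dist (psiSnd α J Φ q d) (psiSnd α J Φ q e)
      = 2 * α * |Φ (q - J * e) - Φ (q - J * d)| := by
        rw [Real.dist_eq, ← abs_of_nonneg (by positivity : 0 ≤ 2 * α), ← abs_mul]
        unfold psiSnd; ring_nf
    _ ≤ 2 * α * (K * (J * |d - e|)) := by gcongr
    _ = 2 * α * J * K * dist d e := by rw [Real.dist_eq]; ring

theorem lipschitzWith_psiSnd_left (hα : 0 ≤ α) (hα1 : α ≤ 1) (hΦ : LipschitzWith K Φ) (d : ℝ) :
    LipschitzWith (2 * K) fun q => psiSnd α J Φ q d := by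
  refine LipschitzWith.of_dist_le_mul fun q r => ?_
  have h₁ := hΦ.dist_le_mul (q - J * d) (r - J * d)
  have h₂ := hΦ.dist_le_mul q r
  simp only [Real.dist_eq, sub_sub_sub_cancel_right] at h₁ h₂ ⊢
  calc |psiSnd α J Φ q d - psiSnd α J Φ r d|
      = |2 * α * (Φ (q - J * d) - Φ (r - J * d)) + 2 * (1 - α) * (Φ q - Φ r)| := by
        rw [← abs_neg]; unfold psiSnd; ring_nf
    _ ≤ 2 * α * |Φ (q - J * d) - Φ (r - J * d)| + 2 * (1 - α) * |Φ q - Φ r| := by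
        grw [abs_add_le, abs_mul (2 * α), abs_mul (2 * (1 - α)),
          abs_of_nonneg (by positivity : 0 ≤ 2 * α), abs_of_nonneg (by linarith : 0 ≤ 2 * (1 - α))]
    _ ≤ 2 * α * (K * |q - r|) + 2 * (1 - α) * (K * |q - r|) := by gcongr
    _ = (2 * K : ℝ≥0) * |q - r| := by push_cast; ring

theorem tendsto_zero_of_tendsto_psiSnd_zero_right {ι : Type*} {l : Filter ι} {u : ι → ℝ}
    (hΦ : StrictMono Φ) (hΦ0 : Φ 0 = 1 / 2)
    (hu : Tendsto (fun n => psiSnd α J Φ (u n) 0) l (𝓝 0)) : Tendsto u l (𝓝 0) := by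
  refine hΦ.tendsto_of_tendsto_comp ?_
  have : Φ ∘ u = fun n => (1 - psiSnd α J Φ (u n) 0) / 2 := by
    ext n; simp only [comp_apply, psiSnd_zero_right]; ring
  rw [this, hΦ0]
  simpa using (hu.const_sub 1).div_const 2

end PsiSnd

theorem global_asymptotic_stability_general
    (α J : ℝ) (Φ Φ' : ℝ → ℝ)
    (hα : 0 < α) (hα1 : α < 1) (hJ : 0 < J)
    (hmono : Monotone Φ)
    (hderiv : ∀ x, HasDerivAt Φ (Φ' x) x)
    (hmax : ∀ x, Φ' x ≤ Φ' 0)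
    (hincr : StrictMonoOn Φ' (Set.Iio (0 : ℝ)))
    (hdecr : StrictAntiOn Φ' (Set.Ioi (0 : ℝ)))
    (hΦ0 : Φ 0 = 1 / 2)
    (hb : 2 * α * J * Φ' 0 < 1)
    (Ψ : ℝ → ℝ × ℝ → ℝ × ℝ)
    (hΨ : ∀ (lam : ℝ) (x : ℝ × ℝ), Ψ lam x =
      (x.1 + lam * x.2,
       α * (1 - 2 * Φ (x.1 + (lam - J) * x.2))
         + (1 - α) * (1 - 2 * Φ (x.1 + lam * x.2)))) :
    ∃ lamc > (0 : ℝ), ∀ lam : ℝ, 0 < lam → lam ≤ lamc →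
      ∀ s : ℕ → ℝ × ℝ, (∀ n : ℕ, s (n + 1) = Ψ lam (s n)) →
        (s 0).2 ∈ Set.Icc (-1 : ℝ) 1 →
        Filter.Tendsto s Filter.atTop (nhds ((0 : ℝ), (0 : ℝ))) := by
  have hΦ'pos : ∀ x, 0 < Φ' x := pos_of_strictMonoOn_Iio_of_strictAntiOn_Ioi_s19
    (fun x => (hderiv x).nonneg_of_monotone hmono) hmax hincr hdecr
  set K := (Φ' 0).toNNReal
  have hK : (K : ℝ) = Φ' 0 := Real.coe_toNNReal _ (hΦ'pos 0).le
  have hΦK : LipschitzWith K Φ :=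
    lipschitzWith_of_hasDerivAt_abs_le hderiv fun x => (abs_of_pos (hΦ'pos x)).trans_le (hmax x)
  set κ := (2 * α * J * K).toNNReal
  have hκ : (κ : ℝ) = 2 * α * J * Φ' 0 := by rw [Real.coe_toNNReal _ (by positivity), hK]
  refine ⟨(1 - 2 * α * J * Φ' 0) ^ 2 / (12 * Φ' 0),
    div_pos (by nlinarith) (by linarith [hΦ'pos 0]), fun lam hlam hlamc s hs _ => ?_⟩
  set q : ℕ → ℝ := fun n => (s n).1 + lam * (s n).2
  have hstep : ∀ n, s (n + 1) = (q n, psiSnd α J Φ (q n) (s n).2) := fun n => by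
    rw [hs, hΨ]; simp only [psiSnd, q]; ring_nf
  obtain ⟨hq_psi, hd⟩ := tendsto_feedback_orbit (κ := κ) (L := 2 * K)
    (by rw [← NNReal.coe_lt_coe, hκ]; exact hb)
    (mul_pos two_pos (Real.toNNReal_pos.2 (hΦ'pos 0)))
    (lipschitzWith_psiSnd_right hα.le hJ.le hΦK) (lipschitzWith_psiSnd_left hα.le hα1.le hΦK)
    (by simp [psiSnd_zero_right, hΦ0]) (mul_psiSnd_zero_right_nonpos hmono hΦ0) hlam
    (by push_cast; rw [hκ, hK]; rw [le_div_iff₀ (by linarith [hΦ'pos 0])] at hlamc; linarith)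
    (q := q) (d := fun n => (s n).2) (fun n => by simp [hstep]) (fun n => by simp [q, hstep])
  have hq : Tendsto q atTop (𝓝 0) :=
    tendsto_zero_of_tendsto_psiSnd_zero_right (strictMono_of_hasDerivAt_pos hderiv hΦ'pos) hΦ0
      hq_psi
  have hs_eq : s = fun n => (q n - lam * (s n).2, (s n).2) := by ext n <;> simp [q]
  rw [hs_eq]
  simpa using (hq.sub (hd.const_mul lam)).prodMk_nhds hd

/-- Theorem dyns: if 2αJΦ′(0) < 1, there exists λ_c > 0 (depending only on α,
J, Φ) such that for every λ ∈ (0, λ_c] the origin is a globally asymptotically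
stable equilibrium of the dynamical system generated by Ψ: every orbit with
d₀ ∈ [−1,1] converges to (0,0). -/
theorem global_asymptotic_stability
    (α J : ℝ) (Φ Φ' : ℝ → ℝ)
    (hα : 0 < α) (hα1 : α < 1) (hJ : 0 < J)
    (hmono : Monotone Φ)
    (hbot : Filter.Tendsto Φ Filter.atBot (nhds 0))
    (htop : Filter.Tendsto Φ Filter.atTop (nhds 1))
    (hderiv : ∀ x, HasDerivAt Φ (Φ' x) x)
    (hmax : ∀ x, Φ' x ≤ Φ' 0)
    (hincr : StrictMonoOn Φ' (Set.Iio (0 : ℝ)))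
    (hdecr : StrictAntiOn Φ' (Set.Ioi (0 : ℝ)))
    (hΦ0 : Φ 0 = 1 / 2)
    (hb : 2 * α * J * Φ' 0 < 1)
    (Ψ : ℝ → ℝ × ℝ → ℝ × ℝ)
    (hΨ : ∀ (lam : ℝ) (x : ℝ × ℝ), Ψ lam x =
      (x.1 + lam * x.2,
       α * (1 - 2 * Φ (x.1 + (lam - J) * x.2))
         + (1 - α) * (1 - 2 * Φ (x.1 + lam * x.2)))) :
    ∃ lamc > (0 : ℝ), ∀ lam : ℝ, 0 < lam → lam ≤ lamc →
      ∀ s : ℕ → ℝ × ℝ, (∀ n : ℕ, s (n + 1) = Ψ lam (s n)) →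
        (s 0).2 ∈ Set.Icc (-1 : ℝ) 1 →
        Filter.Tendsto s Filter.atTop (nhds ((0 : ℝ), (0 : ℝ))) :=
  global_asymptotic_stability_general α J Φ Φ' hα hα1 hJ hmono hderiv hmax hincr hdecr hΦ0 hb Ψ hΨ
end
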